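/- arXiv:2311.07177 — 13 statements merged into one kernel-verified Lean document; each statement's English description precedes it below -/
import Mathlib

section
/- Let H_L, H_R be C² strictly convex Hamiltonians on intervals [a_L,c_L], [a_R,c_R] with H_α decreasing on [a_α,b_α] and increasing on [b_α,c_α], H_α(a_α)=H_α(c_α)=0, and let A ∈ [H₀,0] with H₀ = max(H_L(b_L), H_R(b_R)). Then the germ G_A = {(k_L,k_R) ∈ [a_L,c_L]×[a_R,c_R] : H_R(k_R)=H_L(k_L)=max(A, H_L⁺(k_L), H_R⁻(k_R))} is L¹-dissipative: for any (k_L,k_R),(k̂_L,k̂_R) ∈ G_A, sgn(k_L−k̂_L)(H_L(k_L)−H_L(k̂_L)) ≥ sgn(k_R−k̂_R)(H_R(k_R)−H_R(k̂_R)). -/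
/-!
Both pairs lie on the common level set `HR k_R = HL k_L`, so the inequality reduces to comparing
`sgn (k_R - k̂_R)` with `sgn (k_L - k̂_L)` at the point of larger value. If the two pairs were
ordered oppositely in the two coordinates, with `k_L < k̂_L` but `k̂_R ≤ k_R`, then monotonicity of
`H_L` on `[b_L, c_L]` and of `H_R` on `[a_R, b_R]` leaves only the case `k_L < b_L < k_R`, where
the germ condition forces `H_L(k_L) = A ≤ H_L(k̂_L)`.
-/

open Set

/-- `HL (max k.1 bL)` and `HR (min k.2 bR)` are the envelopes `H_L⁺(k_L)` and `H_R⁻(k_R)`. -/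
def germ (aL bL cL aR bR cR A : ℝ) (HL HR : ℝ → ℝ) : Set (ℝ × ℝ) :=
  {k | k.1 ∈ Icc aL cL ∧ k.2 ∈ Icc aR cR ∧ HR k.2 = HL k.1 ∧
    HL k.1 = max (max A (HL (max k.1 bL))) (HR (min k.2 bR))}

section Germ

variable {aL bL cL aR bR cR A : ℝ} {HL HR : ℝ → ℝ} {k k' : ℝ × ℝ}

lemma le_apply_fst_of_mem_germ (hk : k ∈ germ aL bL cL aR bR cR A HL HR) : A ≤ HL k.1 :=
  hk.2.2.2 ▸ (le_max_left _ _).trans (le_max_left _ _)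

lemma germ_apply_fst_le_of_fst_lt_of_snd_le (hmonoL : MonotoneOn HL (Icc bL cL))
    (hantiR : AntitoneOn HR (Icc aR bR)) (hAL : HL bL ≤ A) (hAR : HR bR ≤ A)
    (hk : k ∈ germ aL bL cL aR bR cR A HL HR) (hk' : k' ∈ germ aL bL cL aR bR cR A HL HR)
    (h1 : k.1 < k'.1) (h2 : k'.2 ≤ k.2) :
    HL k.1 ≤ HL k'.1 := by
  have hk'A := le_apply_fst_of_mem_germ hk'
  obtain ⟨-, -, hkR, hkE⟩ := hk
  obtain ⟨⟨-, hk'1⟩, ⟨hk'2, -⟩, hk'R, -⟩ := hk'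
  rcases le_or_gt bL k.1 with hbL | hbL
  · exact hmonoL ⟨hbL, h1.le.trans hk'1⟩ ⟨hbL.trans h1.le, hk'1⟩ h1.le
  rcases le_or_gt k.2 bR with hbR | hbR
  · rw [← hkR, ← hk'R]
    exact hantiR ⟨hk'2, h2.trans hbR⟩ ⟨hk'2.trans h2, hbR⟩ h2
  have hkA : HL k.1 = A := by
    rw [hkE, max_eq_right hbL.le, min_eq_right hbR.le, max_eq_left hAL, max_eq_left hAR]
  exact hkA ▸ hk'A

lemma sign_snd_sub_le_sign_fst_sub_of_mem_germ (hmonoL : MonotoneOn HL (Icc bL cL))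
    (hantiR : AntitoneOn HR (Icc aR bR)) (hAL : HL bL ≤ A) (hAR : HR bR ≤ A)
    (hk : k ∈ germ aL bL cL aR bR cR A HL HR) (hk' : k' ∈ germ aL bL cL aR bR cR A HL HR)
    (hlt : HL k'.1 < HL k.1) :
    Real.sign (k.2 - k'.2) ≤ Real.sign (k.1 - k'.1) := by
  rcases lt_trichotomy k.1 k'.1 with h1 | h1 | h1
  · have h2 : k.2 < k'.2 := lt_of_not_ge fun h2 =>
      hlt.not_ge (germ_apply_fst_le_of_fst_lt_of_snd_le hmonoL hantiR hAL hAR hk hk' h1 h2)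
    rw [Real.sign_of_neg (sub_neg.2 h1), Real.sign_of_neg (sub_neg.2 h2)]
  · exact absurd (h1 ▸ hlt) (lt_irrefl _)
  · rw [Real.sign_of_pos (sub_pos.2 h1)]
    rcases Real.sign_apply_eq (k.2 - k'.2) with h | h | h <;> rw [h] <;> norm_num

theorem germ_L1_dissipative_of_monotoneOn (hmonoL : MonotoneOn HL (Icc bL cL))
    (hantiR : AntitoneOn HR (Icc aR bR)) (hAL : HL bL ≤ A) (hAR : HR bR ≤ A)
    (hk : k ∈ germ aL bL cL aR bR cR A HL HR) (hk' : k' ∈ germ aL bL cL aR bR cR A HL HR) :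
    Real.sign (k.2 - k'.2) * (HR k.2 - HR k'.2) ≤
      Real.sign (k.1 - k'.1) * (HL k.1 - HL k'.1) := by
  wlog hle : HL k'.1 ≤ HL k.1 generalizing k k'
  · have := this hk' hk (le_of_not_ge hle)
    rwa [← neg_sub k.1, ← neg_sub k.2, ← neg_sub (HL k.1), ← neg_sub (HR k.2), Real.sign_neg,
      Real.sign_neg, neg_mul_neg, neg_mul_neg] at this
  rw [hk.2.2.1, hk'.2.2.1]
  rcases hle.lt_or_eq with hlt | heq
  · exact mul_le_mul_of_nonneg_right
      (sign_snd_sub_le_sign_fst_sub_of_mem_germ hmonoL hantiR hAL hAR hk hk' hlt)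
      (sub_nonneg.2 hle)
  · simp [heq]

end Germ

theorem germ_L1_dissipative_general
    (aL bL cL aR bR cR A : ℝ)
    (HL HR : ℝ → ℝ)
    (hincL : StrictMonoOn HL (Icc bL cL))
    (hdecR : StrictAntiOn HR (Icc aR bR))
    (hA : A ∈ Icc (max (HL bL) (HR bR)) 0)
    (GA : Set (ℝ × ℝ))
    (hGA : GA = {k : ℝ × ℝ | k.1 ∈ Icc aL cL ∧ k.2 ∈ Icc aR cR ∧
        HR k.2 = HL k.1 ∧
        HL k.1 = max (max A (HL (max k.1 bL))) (HR (min k.2 bR))}) :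
    ∀ k ∈ GA, ∀ k' ∈ GA,
      Real.sign (k.2 - k'.2) * (HR k.2 - HR k'.2) ≤
        Real.sign (k.1 - k'.1) * (HL k.1 - HL k'.1) := by
  intro k hk k' hk'
  subst hGA
  exact germ_L1_dissipative_of_monotoneOn hincL.monotoneOn hdecR.antitoneOn
    (le_of_max_le_left hA.1) (le_of_max_le_right hA.1) hk hk'

/-- The germ $\mathcal G_A$ is $L^1$-dissipative. -/
theorem germ_L1_dissipative
    (aL bL cL aR bR cR δ A : ℝ)
    (HL HR : ℝ → ℝ)
    (haL : aL < bL) (hbL : bL < cL) (haR : aR < bR) (hbR : bR < cR)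
    (hδ : 0 < δ)
    (hCL : ContDiffOn ℝ 2 HL (Icc aL cL)) (hCR : ContDiffOn ℝ 2 HR (Icc aR cR))
    (hconvL : ∀ x ∈ Icc aL cL, δ ≤ deriv (deriv HL) x)
    (hconvR : ∀ x ∈ Icc aR cR, δ ≤ deriv (deriv HR) x)
    (hdecL : StrictAntiOn HL (Icc aL bL)) (hincL : StrictMonoOn HL (Icc bL cL))
    (hdecR : StrictAntiOn HR (Icc aR bR)) (hincR : StrictMonoOn HR (Icc bR cR))
    (h0La : HL aL = 0) (h0Lc : HL cL = 0) (h0Ra : HR aR = 0) (h0Rc : HR cR = 0)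
    (hA : A ∈ Icc (max (HL bL) (HR bR)) 0)
    (GA : Set (ℝ × ℝ))
    (hGA : GA = {k : ℝ × ℝ | k.1 ∈ Icc aL cL ∧ k.2 ∈ Icc aR cR ∧
        HR k.2 = HL k.1 ∧
        HL k.1 = max (max A (HL (max k.1 bL))) (HR (min k.2 bR))}) :
    ∀ k ∈ GA, ∀ k' ∈ GA,
      Real.sign (k.2 - k'.2) * (HR k.2 - HR k'.2) ≤
        Real.sign (k.1 - k'.1) * (HL k.1 - HL k'.1) :=
  germ_L1_dissipative_general aL bL cL aR bR cR A HL HR hincL hdecR hA GA hGA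
end

section
/- Under the same hypotheses, the germ G_A admits the equivalent characterization: G_A = {(k_L,k_R) ∈ [a_L,c_L]×[a_R,c_R] : H_R(k_R)=H_L(k_L) ≥ A and (H_R(k_R)=A or H_R(k_R)=H_R⁻(k_R) or H_L(k_L)=H_L⁺(k_L))}. -/
/-!
The envelopes `H_L⁺(k) = HL (max k bL)` and `H_R⁻(k) = HR (min k bR)` never exceed `HL k`
and `HR k` by monotonicity on the outer branches, so the common value `HL kL = HR kR` equals
`max A H_L⁺ H_R⁻` exactly when it is at least `A` and attained by one of the three terms.
-/

open Set

theorem AntitoneOn.map_max_le {α β : Type*} [LinearOrder α] [Preorder β] {f : α → β}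
    {a b x : α} (hf : AntitoneOn f (Icc a b)) (hx : a ≤ x) : f (max x b) ≤ f x := by
  rcases le_total b x with hbx | hxb
  · rw [max_eq_left hbx]
  · rw [max_eq_right hxb]
    exact hf ⟨hx, hxb⟩ ⟨hx.trans hxb, le_rfl⟩ hxb

theorem MonotoneOn.map_min_le {α β : Type*} [LinearOrder α] [Preorder β] {f : α → β}
    {a b x : α} (hf : MonotoneOn f (Icc a b)) (hx : x ≤ b) : f (min x a) ≤ f x := by
  rcases le_total x a with hxa | hax
  · rw [min_eq_left hxa]
  · rw [min_eq_right hax]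
    exact hf ⟨le_rfl, hax.trans hx⟩ ⟨hax, hx⟩ hax

theorem eq_max_max_iff {α : Type*} [LinearOrder α] {h a x y : α} (hx : x ≤ h) (hy : y ≤ h) :
    h = max (max a x) y ↔ a ≤ h ∧ (h = a ∨ h = y ∨ h = x) := by
  constructor
  · intro hmax
    refine ⟨hmax ▸ (le_max_left a x).trans (le_max_left _ y), ?_⟩
    rcases max_choice (max a x) y with hxy | hxy <;> rw [hxy] at hmax
    · rcases max_choice a x with hax | hax <;> rw [hax] at hmax <;> simp [hmax]
    · exact Or.inr (Or.inl hmax)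
  · rintro ⟨hah, hcases⟩
    refine le_antisymm ?_ (max_le (max_le hah hx) hy)
    rcases hcases with hha | hhy | hhx
    · exact hha.le.trans ((le_max_left a x).trans (le_max_left _ y))
    · exact hhy.le.trans (le_max_right _ y)
    · exact hhx.le.trans ((le_max_right a x).trans (le_max_left _ y))

theorem germ_characterization_general
    (aL bL cL aR bR cR A : ℝ)
    (HL HR : ℝ → ℝ)
    (hdecL : StrictAntiOn HL (Icc aL bL))
    (hincR : StrictMonoOn HR (Icc bR cR))
    (GA : Set (ℝ × ℝ))
    (hGA : GA = {k : ℝ × ℝ | k.1 ∈ Icc aL cL ∧ k.2 ∈ Icc aR cR ∧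
        HR k.2 = HL k.1 ∧
        HL k.1 = max (max A (HL (max k.1 bL))) (HR (min k.2 bR))}) :
    GA = {k : ℝ × ℝ | k.1 ∈ Icc aL cL ∧ k.2 ∈ Icc aR cR ∧
      HR k.2 = HL k.1 ∧ A ≤ HR k.2 ∧
      (HR k.2 = A ∨ HR k.2 = HR (min k.2 bR) ∨ HL k.1 = HL (max k.1 bL))} := by
  subst hGA
  ext ⟨kL, kR⟩
  simp only [mem_ofPred_eq]
  refine and_congr_right fun hkL => and_congr_right fun hkR => and_congr_right fun heq => ?_
  rw [heq]
  exact eq_max_max_iff (hdecL.antitoneOn.map_max_le hkL.1)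
    (heq ▸ hincR.monotoneOn.map_min_le hkR.2)

/-- Equivalent characterization of the germ $\mathcal G_A$. -/
theorem germ_characterization
    (aL bL cL aR bR cR δ A : ℝ)
    (HL HR : ℝ → ℝ)
    (haL : aL < bL) (hbL : bL < cL) (haR : aR < bR) (hbR : bR < cR)
    (hδ : 0 < δ)
    (hCL : ContDiffOn ℝ 2 HL (Icc aL cL)) (hCR : ContDiffOn ℝ 2 HR (Icc aR cR))
    (hconvL : ∀ x ∈ Icc aL cL, δ ≤ deriv (deriv HL) x)
    (hconvR : ∀ x ∈ Icc aR cR, δ ≤ deriv (deriv HR) x)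
    (hdecL : StrictAntiOn HL (Icc aL bL)) (hincL : StrictMonoOn HL (Icc bL cL))
    (hdecR : StrictAntiOn HR (Icc aR bR)) (hincR : StrictMonoOn HR (Icc bR cR))
    (h0La : HL aL = 0) (h0Lc : HL cL = 0) (h0Ra : HR aR = 0) (h0Rc : HR cR = 0)
    (hA : A ∈ Icc (max (HL bL) (HR bR)) 0)
    (GA : Set (ℝ × ℝ))
    (hGA : GA = {k : ℝ × ℝ | k.1 ∈ Icc aL cL ∧ k.2 ∈ Icc aR cR ∧
        HR k.2 = HL k.1 ∧
        HL k.1 = max (max A (HL (max k.1 bL))) (HR (min k.2 bR))}) :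
    GA = {k : ℝ × ℝ | k.1 ∈ Icc aL cL ∧ k.2 ∈ Icc aR cR ∧
      HR k.2 = HL k.1 ∧ A ≤ HR k.2 ∧
      (HR k.2 = A ∨ HR k.2 = HR (min k.2 bR) ∨ HL k.1 = HL (max k.1 bL))} :=
  germ_characterization_general aL bL cL aR bR cR A HL HR hdecL hincR GA hGA
end

section
/- The finite set E_A = {(a_L,a_R), (c_L,c_R), (p̄_L^A, p̄_R^A)}, where (p̄_L^A, p̄_R^A) is the unique pair with H_L(p̄_L^A)=H_L⁻(p̄_L^A)=A=H_R⁺(p̄_R^A)=H_R(p̄_R^A), generates G_A on the box Q=[a_L,c_L]×[a_R,c_R]: for any (k_L,k_R) ∈ Q, if q_L(k_L, k̄_L) − q_R(k_R, k̄_R) ≥ 0 for all (k̄_L,k̄_R) ∈ E_A, then (k_L,k_R) ∈ G_A, where q_α(q,p) = sgn(q−p)(H_α(q)−H_α(p)). -/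
/-!
Testing against the two corners `(a_L, a_R)` and `(c_L, c_R)`, where both fluxes vanish, gives
`H_R(k_R) ≤ H_L(k_L)` and the reverse inequality, so `H_L(k_L) = H_R(k_R) =: h`. Testing against
`(p̄_L, p̄_R)`, where both fluxes equal `A`, yields `A ≤ h` when `k_L ≥ p̄_L` and `k_R ≤ p̄_R`, and
`h ≤ A` when `k_L ≤ p̄_L` and `k_R ≥ p̄_R`; in the remaining configurations the same conclusions
follow from monotonicity on the branches of `H_L` and `H_R` on which `p̄_L` and `p̄_R` lie.
Together with the envelope bounds `H_L⁺ ≤ H_L`, `H_R⁻ ≤ H_R` this identifies `h` with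
`max (A, H_L⁺(k_L), H_R⁻(k_R))`.
-/

open Set

noncomputable def kruzhkovFlux (H : ℝ → ℝ) (q p : ℝ) : ℝ := Real.sign (q - p) * (H q - H p)

section KruzhkovFlux

variable {H : ℝ → ℝ} {p q : ℝ}

lemma kruzhkovFlux_of_le (h : p ≤ q) : kruzhkovFlux H q p = H q - H p := by
  rcases h.eq_or_lt with rfl | hlt
  · simp [kruzhkovFlux]
  · rw [kruzhkovFlux, Real.sign_of_pos (sub_pos.2 hlt), one_mul]

lemma kruzhkovFlux_of_ge (h : q ≤ p) : kruzhkovFlux H q p = H p - H q := by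
  rcases h.eq_or_lt with rfl | hlt
  · simp [kruzhkovFlux]
  · rw [kruzhkovFlux, Real.sign_of_neg (sub_neg.2 hlt)]
    ring

end KruzhkovFlux

section Unimodal

variable {H : ℝ → ℝ} {a b c p x : ℝ}

lemma le_of_apply_min_eq (hinc : StrictMonoOn H (Icc b c)) (hpc : p ≤ c)
    (h : H (min p b) = H p) : p ≤ b := by
  by_contra! hbp
  rw [min_eq_right hbp.le] at h
  exact hbp.ne (hinc.injOn ⟨le_rfl, hbp.le.trans hpc⟩ ⟨hbp.le, hpc⟩ h)

lemma le_of_apply_max_eq (hdec : StrictAntiOn H (Icc a b)) (hap : a ≤ p)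
    (h : H (max p b) = H p) : b ≤ p := by
  by_contra! hpb
  rw [max_eq_right hpb.le] at h
  exact hpb.ne' (hdec.injOn ⟨hap.trans hpb.le, le_rfl⟩ ⟨hap, hpb.le⟩ h)

lemma apply_max_le_of_antitoneOn (hdec : AntitoneOn H (Icc a b)) (hab : a ≤ b) (hx : a ≤ x) :
    H (max x b) ≤ H x := by
  rcases le_total x b with hxb | hbx
  · rw [max_eq_right hxb]
    exact hdec ⟨hx, hxb⟩ ⟨hab, le_rfl⟩ hxb
  · rw [max_eq_left hbx]

lemma apply_min_le_of_monotoneOn (hinc : MonotoneOn H (Icc b c)) (hbc : b ≤ c) (hx : x ≤ c) :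
    H (min x b) ≤ H x := by
  rcases le_total x b with hxb | hbx
  · rw [min_eq_left hxb]
  · rw [min_eq_right hbx]
    exact hinc ⟨le_rfl, hbc⟩ ⟨hbx, hx⟩ hbx

end Unimodal

section Germ

variable {HL HR : ℝ → ℝ} {aL bL cL aR bR cR kL kR pL pR A : ℝ}

lemma apply_eq_of_kruzhkovFlux_le_of_zeros (hkL : kL ∈ Icc aL cL) (hkR : kR ∈ Icc aR cR)
    (h0La : HL aL = 0) (h0Lc : HL cL = 0) (h0Ra : HR aR = 0) (h0Rc : HR cR = 0)
    (ha : kruzhkovFlux HR kR aR ≤ kruzhkovFlux HL kL aL)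
    (hc : kruzhkovFlux HR kR cR ≤ kruzhkovFlux HL kL cL) : HR kR = HL kL := by
  rw [kruzhkovFlux_of_le hkR.1, kruzhkovFlux_of_le hkL.1, h0La, h0Ra] at ha
  rw [kruzhkovFlux_of_ge hkR.2, kruzhkovFlux_of_ge hkL.2, h0Lc, h0Rc] at hc
  linarith

lemma le_apply_of_kruzhkovFlux_le
    (hdecL : AntitoneOn HL (Icc aL bL)) (hincR : MonotoneOn HR (Icc bR cR))
    (hpLA : HL pL = A) (hpRA : HR pR = A) (heq : HR kR = HL kL)
    (hflux : kruzhkovFlux HR kR pR ≤ kruzhkovFlux HL kL pL)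
    (hkL : aL ≤ kL) (hkR : kR ≤ cR) (hpL : pL ≤ bL) (hpR : bR ≤ pR) : A ≤ HL kL := by
  rcases le_total kL pL with hkp | hpk
  · exact hpLA ▸ hdecL ⟨hkL, hkp.trans hpL⟩ ⟨hkL.trans hkp, hpL⟩ hkp
  rcases le_total pR kR with hpk' | hkp'
  · exact heq ▸ hpRA ▸ hincR ⟨hpR, hpk'.trans hkR⟩ ⟨hpR.trans hpk', hkR⟩ hpk'
  rw [kruzhkovFlux_of_ge hkp', kruzhkovFlux_of_le hpk] at hflux
  linarith

lemma apply_le_of_kruzhkovFlux_le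
    (hdecL : AntitoneOn HL (Icc aL bL)) (hincR : MonotoneOn HR (Icc bR cR))
    (hpLA : HL pL = A) (hpRA : HR pR = A) (heq : HR kR = HL kL)
    (hflux : kruzhkovFlux HR kR pR ≤ kruzhkovFlux HL kL pL)
    (hkL : kL ≤ bL) (hkR : bR ≤ kR) (hpL : aL ≤ pL) (hpR : pR ≤ cR) : HL kL ≤ A := by
  rcases le_total pL kL with hpk | hkp
  · exact hpLA ▸ hdecL ⟨hpL, hpk.trans hkL⟩ ⟨hpL.trans hpk, hkL⟩ hpk
  rcases le_total kR pR with hkp' | hpk'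
  · exact heq ▸ hpRA ▸ hincR ⟨hkR, hkp'.trans hpR⟩ ⟨hkR.trans hkp', hpR⟩ hkp'
  rw [kruzhkovFlux_of_le hpk', kruzhkovFlux_of_ge hkp] at hflux
  linarith

end Germ
theorem germ_generated_by_EA_general
    (aL bL cL aR bR cR A : ℝ)
    (HL HR : ℝ → ℝ)
    (haL : aL < bL) (hbR : bR < cR)
    (hdecL : StrictAntiOn HL (Icc aL bL)) (hincL : StrictMonoOn HL (Icc bL cL))
    (hdecR : StrictAntiOn HR (Icc aR bR)) (hincR : StrictMonoOn HR (Icc bR cR))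
    (h0La : HL aL = 0) (h0Lc : HL cL = 0) (h0Ra : HR aR = 0) (h0Rc : HR cR = 0)
    (GA : Set (ℝ × ℝ))
    (hGA : GA = {k : ℝ × ℝ | k.1 ∈ Icc aL cL ∧ k.2 ∈ Icc aR cR ∧
        HR k.2 = HL k.1 ∧
        HL k.1 = max (max A (HL (max k.1 bL))) (HR (min k.2 bR))})
    (pbarL pbarR : ℝ)
    (hpbarLmem : pbarL ∈ Icc aL cL) (hpbarRmem : pbarR ∈ Icc aR cR)
    (hpbarL : HL pbarL = A) (hpbarLenv : HL (min pbarL bL) = A)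
    (hpbarR : HR pbarR = A) (hpbarRenv : HR (max pbarR bR) = A) :
    ∀ k : ℝ × ℝ, k.1 ∈ Icc aL cL → k.2 ∈ Icc aR cR →
      (∀ k' ∈ ({(aL, aR), (cL, cR), (pbarL, pbarR)} : Set (ℝ × ℝ)),
        Real.sign (k.2 - k'.2) * (HR k.2 - HR k'.2) ≤
          Real.sign (k.1 - k'.1) * (HL k.1 - HL k'.1)) →
      k ∈ GA := by
  rintro ⟨kL, kR⟩ (hkL : kL ∈ Icc aL cL) (hkR : kR ∈ Icc aR cR) hE
  have hflux : ∀ k' ∈ ({(aL, aR), (cL, cR), (pbarL, pbarR)} : Set (ℝ × ℝ)),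
      kruzhkovFlux HR kR k'.2 ≤ kruzhkovFlux HL kL k'.1 := hE
  have hpL : pbarL ≤ bL := le_of_apply_min_eq hincL hpbarLmem.2 (hpbarLenv.trans hpbarL.symm)
  have hpR : bR ≤ pbarR := le_of_apply_max_eq hdecR hpbarRmem.1 (hpbarRenv.trans hpbarR.symm)
  have heq : HR kR = HL kL := apply_eq_of_kruzhkovFlux_le_of_zeros hkL hkR h0La h0Lc h0Ra h0Rc
    (hflux (aL, aR) (by simp)) (hflux (cL, cR) (by simp))
  have hfluxA := hflux (pbarL, pbarR) (by simp)
  have hAle : A ≤ HL kL := le_apply_of_kruzhkovFlux_le hdecL.antitoneOn hincR.monotoneOn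
    hpbarL hpbarR heq hfluxA hkL.1 hkR.2 hpL hpR
  have henvL : HL (max kL bL) ≤ HL kL := apply_max_le_of_antitoneOn hdecL.antitoneOn haL.le hkL.1
  have henvR : HR (min kR bR) ≤ HL kL :=
    heq ▸ apply_min_le_of_monotoneOn hincR.monotoneOn hbR.le hkR.2
  subst hGA
  refine ⟨hkL, hkR, heq, le_antisymm ?_ (max_le (max_le hAle henvL) henvR)⟩
  rcases le_total bL kL with hbk | hkb
  · exact le_max_of_le_left (le_max_of_le_right (by rw [max_eq_left hbk]))
  rcases le_total kR bR with hkb' | hbk'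
  · exact le_max_of_le_right (by rw [min_eq_left hkb', heq])
  exact le_max_of_le_left (le_max_of_le_left (apply_le_of_kruzhkovFlux_le hdecL.antitoneOn
    hincR.monotoneOn hpbarL hpbarR heq hfluxA hkb hbk' hpbarLmem.1 hpbarRmem.2))

/-- The three-element set $\mathcal E_A$ generates the germ $\mathcal G_A$ on the box $Q$. -/
theorem germ_generated_by_EA
    (aL bL cL aR bR cR δ A : ℝ)
    (HL HR : ℝ → ℝ)
    (haL : aL < bL) (hbL : bL < cL) (haR : aR < bR) (hbR : bR < cR)
    (hδ : 0 < δ)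
    (hCL : ContDiffOn ℝ 2 HL (Icc aL cL)) (hCR : ContDiffOn ℝ 2 HR (Icc aR cR))
    (hconvL : ∀ x ∈ Icc aL cL, δ ≤ deriv (deriv HL) x)
    (hconvR : ∀ x ∈ Icc aR cR, δ ≤ deriv (deriv HR) x)
    (hdecL : StrictAntiOn HL (Icc aL bL)) (hincL : StrictMonoOn HL (Icc bL cL))
    (hdecR : StrictAntiOn HR (Icc aR bR)) (hincR : StrictMonoOn HR (Icc bR cR))
    (h0La : HL aL = 0) (h0Lc : HL cL = 0) (h0Ra : HR aR = 0) (h0Rc : HR cR = 0)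
    (hA : A ∈ Icc (max (HL bL) (HR bR)) 0)
    (GA : Set (ℝ × ℝ))
    (hGA : GA = {k : ℝ × ℝ | k.1 ∈ Icc aL cL ∧ k.2 ∈ Icc aR cR ∧
        HR k.2 = HL k.1 ∧
        HL k.1 = max (max A (HL (max k.1 bL))) (HR (min k.2 bR))})
    (pbarL pbarR : ℝ)
    (hpbarLmem : pbarL ∈ Icc aL cL) (hpbarRmem : pbarR ∈ Icc aR cR)
    (hpbarL : HL pbarL = A) (hpbarLenv : HL (min pbarL bL) = A)
    (hpbarR : HR pbarR = A) (hpbarRenv : HR (max pbarR bR) = A) :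
    ∀ k : ℝ × ℝ, k.1 ∈ Icc aL cL → k.2 ∈ Icc aR cR →
      (∀ k' ∈ ({(aL, aR), (cL, cR), (pbarL, pbarR)} : Set (ℝ × ℝ)),
        Real.sign (k.2 - k'.2) * (HR k.2 - HR k'.2) ≤
          Real.sign (k.1 - k'.1) * (HL k.1 - HL k'.1)) →
      k ∈ GA :=
  germ_generated_by_EA_general aL bL cL aR bR cR A HL HR haL hbR hdecL hincL hdecR hincR h0La h0Lc
    h0Ra h0Rc GA hGA pbarL pbarR hpbarLmem hpbarRmem hpbarL hpbarLenv hpbarR hpbarRenv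
end

section
/- Under the same hypotheses on H_L, H_R and F₀ (F₀ nondecreasing in the first variable, nonincreasing in the second), the set Λ = {λ : ∃(p̄_L,p̄_R) with λ = F₀(p̄_L,p̄_R) = H_R⁺(p̄_R) = H_L⁻(p̄_L)} contains at most one element. -/
open Set

/-- The set $\Lambda$ contains at most one element. -/
theorem Lambda_subsingleton
    (aL bL cL aR bR cR δ : ℝ)
    (HL HR : ℝ → ℝ)
    (haL : aL < bL) (hbL : bL < cL) (haR : aR < bR) (hbR : bR < cR)
    (hδ : 0 < δ)
    (hCL : ContDiffOn ℝ 2 HL (Icc aL cL)) (hCR : ContDiffOn ℝ 2 HR (Icc aR cR))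
    (hconvL : ∀ x ∈ Icc aL cL, δ ≤ deriv (deriv HL) x)
    (hconvR : ∀ x ∈ Icc aR cR, δ ≤ deriv (deriv HR) x)
    (hdecL : StrictAntiOn HL (Icc aL bL)) (hincL : StrictMonoOn HL (Icc bL cL))
    (hdecR : StrictAntiOn HR (Icc aR bR)) (hincR : StrictMonoOn HR (Icc bR cR))
    (hminL : ∀ p ∈ Icc aL cL, HL bL ≤ HL p) (hminR : ∀ p ∈ Icc aR cR, HR bR ≤ HR p)
    (h0La : HL aL = 0) (h0Lc : HL cL = 0) (h0Ra : HR aR = 0) (h0Rc : HR cR = 0)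
    (F0 : ℝ → ℝ → ℝ)
    (hmono1 : ∀ q, Monotone fun p => F0 p q)
    (hmono2 : ∀ p, Antitone fun q => F0 p q) :
    ∀ lam1 lam2 : ℝ,
      (∃ pL pR : ℝ, pL ∈ Icc aL cL ∧ pR ∈ Icc aR cR ∧
        lam1 = F0 pL pR ∧ lam1 = HR (max pR bR) ∧ lam1 = HL (min pL bL)) →
      (∃ pL pR : ℝ, pL ∈ Icc aL cL ∧ pR ∈ Icc aR cR ∧
        lam2 = F0 pL pR ∧ lam2 = HR (max pR bR) ∧ lam2 = HL (min pL bL)) →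
      lam1 = lam2 := by
  have key : ∀ l1 l2 : ℝ,
      (∃ pL pR : ℝ, pL ∈ Icc aL cL ∧ pR ∈ Icc aR cR ∧
        l1 = F0 pL pR ∧ l1 = HR (max pR bR) ∧ l1 = HL (min pL bL)) →
      (∃ pL pR : ℝ, pL ∈ Icc aL cL ∧ pR ∈ Icc aR cR ∧
        l2 = F0 pL pR ∧ l2 = HR (max pR bR) ∧ l2 = HL (min pL bL)) →
      ¬ l1 < l2 := by
    rintro l1 l2 ⟨p1L, p1R, hp1L, hp1R, hF1, hR1, hL1⟩
      ⟨p2L, p2R, hp2L, hp2R, hF2, hR2, hL2⟩ hlt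
    -- memberships
    have hm1 : min p1L bL ∈ Icc aL bL :=
      ⟨le_min hp1L.1 haL.le, min_le_right _ _⟩
    have hm2 : min p2L bL ∈ Icc aL bL :=
      ⟨le_min hp2L.1 haL.le, min_le_right _ _⟩
    have hM1 : max p1R bR ∈ Icc bR cR :=
      ⟨le_max_right _ _, max_le hp1R.2 hbR.le⟩
    have hM2 : max p2R bR ∈ Icc bR cR :=
      ⟨le_max_right _ _, max_le hp2R.2 hbR.le⟩
    -- HL(min p1L bL) < HL(min p2L bL) ⇒ min p2L bL < min p1L bL
    have hLlt : min p2L bL < min p1L bL := by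
      have := (hdecL.lt_iff_gt hm1 hm2).mp (by rw [← hL1, ← hL2]; exact hlt)
      exact this
    have hpL : p2L ≤ p1L := by
      have hb : p2L < bL := by
        by_contra h
        push_neg at h
        rw [min_eq_right h] at hLlt
        exact absurd (min_le_right p1L bL) (not_le.mpr hLlt)
      have h2 : min p2L bL = p2L := min_eq_left hb.le
      have : p2L < p1L := lt_of_lt_of_le (h2 ▸ hLlt) (min_le_left _ _)
      exact this.le
    -- HR(max p1R bR) < HR(max p2R bR) ⇒ max p1R bR < max p2R bR
    have hRlt : max p1R bR < max p2R bR :=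
      (hincR.lt_iff_lt hM1 hM2).mp (by rw [← hR1, ← hR2]; exact hlt)
    have hpR : p1R ≤ p2R := by
      have hb : bR < p2R := by
        by_contra h
        push_neg at h
        rw [max_eq_right h] at hRlt
        exact absurd (le_max_right p1R bR) (not_le.mpr hRlt)
      have h2 : max p2R bR = p2R := max_eq_left hb.le
      have : p1R < p2R := lt_of_le_of_lt (le_max_left _ _) (h2 ▸ hRlt)
      exact this.le
    have : l2 ≤ l1 := by
      calc l2 = F0 p2L p2R := hF2
        _ ≤ F0 p1L p2R := hmono1 p2R hpL
        _ ≤ F0 p1L p1R := hmono2 p1L hpR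
        _ = l1 := hF1.symm
    exact absurd hlt (not_lt.mpr this)
  intro lam1 lam2 h1 h2
  exact le_antisymm (not_lt.mp (key lam2 lam1 h2 h1)) (not_lt.mp (key lam1 lam2 h1 h2))
end

section
/- If F₀ = F̄_A where F̄_A(p_L,p_R) = max(A, H_L⁺(p_L), H_R⁻(p_R)) for some A ∈ [H₀,0], then the flux limiter A_{F₀} constructed from F₀ equals A; that is, there exists (p̄_L,p̄_R) with A = F̄_A(p̄_L,p̄_R) = H_R⁺(p̄_R) = H_L⁻(p̄_L), and A is the unique such value. -/
/-!
Since `H_L(b_L) ≤ A ≤ 0 = H_L(a_L)` and `H_R(b_R) ≤ A ≤ 0 = H_R(c_R)`, the intermediate value theorem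
puts `A` on the decreasing branch of `H_L` and on the increasing branch of `H_R`, which gives the
point `(p̄_L, p̄_R)`. Conversely, if `λ > A` then `λ` is `H_L⁺(p_L)` or `H_R⁻(p_R)`; together with
`λ = H_L⁻(p_L)` (resp. `λ = H_R⁺(p_R)`) this forces `λ = H_L(b_L)` (resp. `H_R(b_R)`), which is `≤ A`.
-/

open Set

theorem apply_eq_of_apply_max_eq_of_apply_min_eq {α β : Type*} [LinearOrder α] {f : α → β}
    {p b : α} {y : β} (hmax : f (max p b) = y) (hmin : f (min p b) = y) : f b = y := by
  rcases le_total p b with h | h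
  · rwa [max_eq_right h] at hmax
  · rwa [min_eq_right h] at hmin

theorem eq_of_eq_max_of_eq_apply_max_of_eq_apply_min {α β : Type*} [LinearOrder α]
    [LinearOrder β] {HL HR : α → β} {pL bL pR bR : α} {A lam : β}
    (hLA : HL bL ≤ A) (hRA : HR bR ≤ A)
    (hlam : lam = max (max A (HL (max pL bL))) (HR (min pR bR)))
    (hlamR : lam = HR (max pR bR)) (hlamL : lam = HL (min pL bL)) : lam = A := by
  have hAle : A ≤ lam := hlam ▸ le_max_of_le_left (le_max_left _ _)
  refine le_antisymm ?_ hAle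
  rcases max_choice (max A (HL (max pL bL))) (HR (min pR bR)) with h | h <;> rw [h] at hlam
  · rcases max_choice A (HL (max pL bL)) with h' | h' <;> rw [h'] at hlam
    · exact hlam.le
    · have : HL bL = lam := apply_eq_of_apply_max_eq_of_apply_min_eq hlam.symm hlamL.symm
      exact this ▸ hLA
  · have : HR bR = lam := apply_eq_of_apply_max_eq_of_apply_min_eq hlamR.symm hlam.symm
    exact this ▸ hRA

theorem flux_limiter_of_FA_general
    (aL bL cL aR bR cR : ℝ)
    (HL HR : ℝ → ℝ)
    (haL : aL < bL) (hbL : bL < cL) (haR : aR < bR) (hbR : bR < cR)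
    (hCL : ContDiffOn ℝ 2 HL (Icc aL cL)) (hCR : ContDiffOn ℝ 2 HR (Icc aR cR))
    (h0La : HL aL = 0) (h0Rc : HR cR = 0)
    (A : ℝ) (hA : A ∈ Icc (max (HL bL) (HR bR)) 0) :
    (∃ pL pR : ℝ, pL ∈ Icc aL cL ∧ pR ∈ Icc aR cR ∧
        A = max (max A (HL (max pL bL))) (HR (min pR bR)) ∧
        A = HR (max pR bR) ∧ A = HL (min pL bL)) ∧
    (∀ lam pL pR : ℝ, pL ∈ Icc aL cL → pR ∈ Icc aR cR →
        lam = max (max A (HL (max pL bL))) (HR (min pR bR)) →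
        lam = HR (max pR bR) → lam = HL (min pL bL) → lam = A) := by
  obtain ⟨hAmin, hA0⟩ := hA
  have hLA : HL bL ≤ A := (le_max_left _ _).trans hAmin
  have hRA : HR bR ≤ A := (le_max_right _ _).trans hAmin
  obtain ⟨pL, ⟨haL_pL, hpL_bL⟩, hpL⟩ := intermediate_value_Icc' haL.le
    (hCL.continuousOn.mono (Icc_subset_Icc_right hbL.le)) ⟨hLA, h0La ▸ hA0⟩
  obtain ⟨pR, ⟨hbR_pR, hpR_cR⟩, hpR⟩ := intermediate_value_Icc hbR.le
    (hCR.continuousOn.mono (Icc_subset_Icc_left haR.le)) ⟨hRA, h0Rc ▸ hA0⟩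
  refine ⟨⟨pL, pR, ⟨haL_pL, hpL_bL.trans hbL.le⟩, ⟨haR.le.trans hbR_pR, hpR_cR⟩, ?_, ?_, ?_⟩,
    fun lam _ _ _ _ => eq_of_eq_max_of_eq_apply_max_of_eq_apply_min hLA hRA⟩
  · rw [max_eq_right hpL_bL, min_eq_right hbR_pR, max_eq_left hLA, max_eq_left hRA]
  · rw [max_eq_left hbR_pR, hpR]
  · rw [min_eq_left hpL_bL, hpL]

/-- If $F_0 = \bar F_A$ for some $A \in [H_0,0]$, then the flux limiter $A_{F_0}$ equals $A$. -/
theorem flux_limiter_of_FA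
    (aL bL cL aR bR cR δ : ℝ)
    (HL HR : ℝ → ℝ)
    (haL : aL < bL) (hbL : bL < cL) (haR : aR < bR) (hbR : bR < cR)
    (hδ : 0 < δ)
    (hCL : ContDiffOn ℝ 2 HL (Icc aL cL)) (hCR : ContDiffOn ℝ 2 HR (Icc aR cR))
    (hconvL : ∀ x ∈ Icc aL cL, δ ≤ deriv (deriv HL) x)
    (hconvR : ∀ x ∈ Icc aR cR, δ ≤ deriv (deriv HR) x)
    (hdecL : StrictAntiOn HL (Icc aL bL)) (hincL : StrictMonoOn HL (Icc bL cL))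
    (hdecR : StrictAntiOn HR (Icc aR bR)) (hincR : StrictMonoOn HR (Icc bR cR))
    (hminL : ∀ p ∈ Icc aL cL, HL bL ≤ HL p) (hminR : ∀ p ∈ Icc aR cR, HR bR ≤ HR p)
    (h0La : HL aL = 0) (h0Lc : HL cL = 0) (h0Ra : HR aR = 0) (h0Rc : HR cR = 0)
    (A : ℝ) (hA : A ∈ Icc (max (HL bL) (HR bR)) 0) :
    (∃ pL pR : ℝ, pL ∈ Icc aL cL ∧ pR ∈ Icc aR cR ∧
        A = max (max A (HL (max pL bL))) (HR (min pR bR)) ∧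
        A = HR (max pR bR) ∧ A = HL (min pL bL)) ∧
    (∀ lam pL pR : ℝ, pL ∈ Icc aL cL → pR ∈ Icc aR cR →
        lam = max (max A (HL (max pL bL))) (HR (min pR bR)) →
        lam = HR (max pR bR) → lam = HL (min pL bL) → lam = A) :=
  flux_limiter_of_FA_general aL bL cL aR bR cR HL HR haL hbL haR hbR hCL hCR h0La h0Rc A hA
end

section
/- Assume the scheme \{p^{n+1}_{j+1/2}\} given by the monotone junction scheme with Godunov fluxes g^{H_L} (for j ≤ −2), g^{H_R} (for j ≥ 1), and junction function F₀ at j ∈ {−1,0}, satisfies the CFL condition Δx/Δt ≥ 2L and that F₀(a_L,a_R)=F₀(c_L,c_R)=0. If p^0_{j+1/2} ∈ [a_L,c_L] for j ≤ −1 and p^0_{j+1/2} ∈ [a_R,c_R] for j ≥ 0, then for all n ∈ ℕ, p^n_{j+1/2} ∈ [a_L,c_L] for j ≤ −1 and p^n_{j+1/2} ∈ [a_R,c_R] for j ≥ 0. -/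
/-!
Under the CFL condition the one-step map of the scheme is monotone for the pointwise order on
grid functions: raising `p_j` raises the updated value because the flux differences it causes
are at most `2L` times as large and are multiplied by `Δt/Δx ≤ 1/(2L)`, while raising a
neighbour helps by monotonicity of the fluxes. The piecewise constant states equal to
`(a_L, a_R)` and to `(c_L, c_R)` on the two branches have zero flux at every interface, hence
are fixed points, so the order interval between them is invariant.
-/

open Set

structure IsMonotoneFlux (L : ℝ) (g : ℝ → ℝ → ℝ) : Prop where
  monotone_left : ∀ b, Monotone fun a => g a b
  antitone_right : ∀ a, Antitone fun b => g a b
  lipschitz_left : ∀ a a' b, |g a b - g a' b| ≤ L * |a - a'|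
  lipschitz_right : ∀ a b b', |g a b - g a b'| ≤ L * |b - b'|

namespace IsMonotoneFlux

variable {L : ℝ} {g : ℝ → ℝ → ℝ}

lemma sub_le_left (hg : IsMonotoneFlux L g) {a a' : ℝ} (b : ℝ) (h : a ≤ a') :
    g a' b - g a b ≤ L * (a' - a) := by
  simpa [abs_of_nonneg (sub_nonneg.mpr h)] using (le_abs_self _).trans (hg.lipschitz_left a' a b)

lemma sub_le_right (hg : IsMonotoneFlux L g) (a : ℝ) {b b' : ℝ} (h : b ≤ b') :
    g a b - g a b' ≤ L * (b' - b) := by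
  simpa [abs_sub_comm b, abs_of_nonneg (sub_nonneg.mpr h)] using
    (le_abs_self _).trans (hg.lipschitz_right a b b')

end IsMonotoneFlux

/-- `G j` is the numerical flux at the node between the cells `j - 1` and `j`, and `r = Δt/Δx`. -/
def schemeStep (r : ℝ) (G : ℤ → ℝ → ℝ → ℝ) (p : ℤ → ℝ) : ℤ → ℝ :=
  fun j => p j - r * (G (j + 1) (p j) (p (j + 1)) - G j (p (j - 1)) (p j))

lemma schemeStep_monotone {L r : ℝ} {G : ℤ → ℝ → ℝ → ℝ} (hG : ∀ j, IsMonotoneFlux L (G j))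
    (hr : 0 ≤ r) (hCFL : 2 * L * r ≤ 1) : Monotone (schemeStep r G) := by
  intro p q hpq j
  have hx : 0 ≤ q j - p j := sub_nonneg.mpr (hpq j)
  have hright : G (j + 1) (q j) (q (j + 1)) - G (j + 1) (p j) (p (j + 1)) ≤ L * (q j - p j) :=
    calc _ = (G (j + 1) (q j) (q (j + 1)) - G (j + 1) (p j) (q (j + 1)))
          + (G (j + 1) (p j) (q (j + 1)) - G (j + 1) (p j) (p (j + 1))) := by ring
      _ ≤ L * (q j - p j) + 0 := by
          gcongr
          · exact (hG _).sub_le_left _ (hpq j)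
          · exact sub_nonpos.mpr ((hG _).antitone_right _ (hpq (j + 1)))
      _ = _ := add_zero _
  have hleft : G j (p (j - 1)) (p j) - G j (q (j - 1)) (q j) ≤ L * (q j - p j) :=
    calc _ = (G j (p (j - 1)) (p j) - G j (q (j - 1)) (p j))
          + (G j (q (j - 1)) (p j) - G j (q (j - 1)) (q j)) := by ring
      _ ≤ 0 + L * (q j - p j) := by
          gcongr
          · exact sub_nonpos.mpr ((hG _).monotone_left _ (hpq (j - 1)))
          · exact (hG _).sub_le_right _ (hpq j)
      _ = _ := zero_add _
  have hscaled : r * (2 * L * (q j - p j)) ≤ q j - p j := by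
    linarith [mul_le_mul_of_nonneg_right hCFL hx]
  simp only [schemeStep]
  linarith [mul_le_mul_of_nonneg_left (add_le_add hright hleft) hr]

lemma schemeStep_eq_self {r : ℝ} {G : ℤ → ℝ → ℝ → ℝ} {p : ℤ → ℝ}
    (h : ∀ j, G j (p (j - 1)) (p j) = 0) : schemeStep r G p = p := by
  funext j
  have h' := h (j + 1)
  rw [add_sub_cancel_right] at h'
  simp [schemeStep, h', h j]

def junctionState (x y : ℝ) : ℤ → ℝ := fun j => if j ≤ -1 then x else y

lemma junctionState_le_iff {x y : ℝ} {p : ℤ → ℝ} :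
    junctionState x y ≤ p ↔ ∀ j, (j ≤ -1 → x ≤ p j) ∧ (0 ≤ j → y ≤ p j) := by
  refine forall_congr' fun j => ?_
  by_cases hj : j ≤ -1 <;> simp [junctionState, hj] <;> omega

lemma le_junctionState_iff {x y : ℝ} {p : ℤ → ℝ} :
    p ≤ junctionState x y ↔ ∀ j, (j ≤ -1 → p j ≤ x) ∧ (0 ≤ j → p j ≤ y) := by
  refine forall_congr' fun j => ?_
  by_cases hj : j ≤ -1 <;> simp [junctionState, hj] <;> omega

lemma mem_Icc_junctionState_iff {aL cL aR cR : ℝ} {p : ℤ → ℝ} :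
    p ∈ Icc (junctionState aL aR) (junctionState cL cR) ↔
      ∀ j, (j ≤ -1 → p j ∈ Icc aL cL) ∧ (0 ≤ j → p j ∈ Icc aR cR) := by
  simp only [mem_Icc, junctionState_le_iff, le_junctionState_iff, ← forall_and]
  exact forall_congr' fun j => by tauto

lemma junction_flux_junctionState_eq_zero {HL HR : ℝ → ℝ} {gL gR F0 : ℝ → ℝ → ℝ}
    {G : ℤ → ℝ → ℝ → ℝ} (hG : ∀ j : ℤ, G j = if j ≤ -1 then gL else if 1 ≤ j then gR else F0)
    (hgL : ∀ p, gL p p = HL p) (hgR : ∀ p, gR p p = HR p) {x y : ℝ}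
    (hx : HL x = 0) (hy : HR y = 0) (hxy : F0 x y = 0) (j : ℤ) :
    G j (junctionState x y (j - 1)) (junctionState x y j) = 0 := by
  rcases lt_trichotomy j 0 with hj | rfl | hj
  · simp [hG, junctionState, show j ≤ -1 by omega, show j - 1 ≤ -1 by omega, hgL, hx]
  · simp [hG, junctionState, hxy]
  · simp [hG, junctionState, show ¬j ≤ -1 by omega, show ¬j - 1 ≤ -1 by omega,
      show 1 ≤ j by omega, hgR, hy]

theorem scheme_stability_general
    (Δt Δx L aL cL aR cR : ℝ)
    (hΔt : 0 < Δt) (hΔx : 0 < Δx)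
    (hCFL : 2 * L ≤ Δx / Δt)
    (HL HR : ℝ → ℝ) (gL gR F0 : ℝ → ℝ → ℝ)
    (hgLcons : ∀ p, gL p p = HL p) (hgRcons : ∀ p, gR p p = HR p)
    (hgL1 : ∀ b, Monotone fun a => gL a b) (hgL2 : ∀ a, Antitone fun b => gL a b)
    (hgR1 : ∀ b, Monotone fun a => gR a b) (hgR2 : ∀ a, Antitone fun b => gR a b)
    (hF01 : ∀ b, Monotone fun a => F0 a b) (hF02 : ∀ a, Antitone fun b => F0 a b)
    (hgLLip1 : ∀ a a' b, |gL a b - gL a' b| ≤ L * |a - a'|)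
    (hgLLip2 : ∀ a b b', |gL a b - gL a b'| ≤ L * |b - b'|)
    (hgRLip1 : ∀ a a' b, |gR a b - gR a' b| ≤ L * |a - a'|)
    (hgRLip2 : ∀ a b b', |gR a b - gR a b'| ≤ L * |b - b'|)
    (hF0Lip1 : ∀ a a' b, |F0 a b - F0 a' b| ≤ L * |a - a'|)
    (hF0Lip2 : ∀ a b b', |F0 a b - F0 a b'| ≤ L * |b - b'|)
    (hHL0 : HL aL = 0) (hHL0' : HL cL = 0) (hHR0 : HR aR = 0) (hHR0' : HR cR = 0)
    (hF00 : F0 aL aR = 0) (hF00' : F0 cL cR = 0)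
    (G : ℤ → ℝ → ℝ → ℝ)
    (hG : ∀ j : ℤ, G j = if j ≤ -1 then gL else if 1 ≤ j then gR else F0)
    (P : ℕ → ℤ → ℝ)
    (hscheme : ∀ (n : ℕ) (j : ℤ), P (n + 1) j =
        P n j - (Δt / Δx) * (G (j + 1) (P n j) (P n (j + 1)) - G j (P n (j - 1)) (P n j)))
    (hinit : ∀ j : ℤ, (j ≤ -1 → P 0 j ∈ Icc aL cL) ∧ (0 ≤ j → P 0 j ∈ Icc aR cR)) :
    ∀ (n : ℕ) (j : ℤ), (j ≤ -1 → P n j ∈ Icc aL cL) ∧ (0 ≤ j → P n j ∈ Icc aR cR) := by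
  have hr : 0 ≤ Δt / Δx := (div_pos hΔt hΔx).le
  have hCFL' : 2 * L * (Δt / Δx) ≤ 1 := by
    calc 2 * L * (Δt / Δx) ≤ Δx / Δt * (Δt / Δx) := mul_le_mul_of_nonneg_right hCFL hr
      _ = 1 := by field_simp
  have hflux : ∀ j, IsMonotoneFlux L (G j) := fun j => by
    rw [hG j]
    split_ifs
    exacts [⟨hgL1, hgL2, hgLLip1, hgLLip2⟩, ⟨hgR1, hgR2, hgRLip1, hgRLip2⟩,
      ⟨hF01, hF02, hF0Lip1, hF0Lip2⟩]
  have hmaps := (schemeStep_monotone hflux hr hCFL').mapsTo_Icc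
    (a := junctionState aL aR) (b := junctionState cL cR)
  rw [schemeStep_eq_self (junction_flux_junctionState_eq_zero hG hgLcons hgRcons hHL0 hHR0 hF00),
    schemeStep_eq_self (junction_flux_junctionState_eq_zero hG hgLcons hgRcons hHL0' hHR0' hF00')]
    at hmaps
  intro n
  rw [← mem_Icc_junctionState_iff]
  induction n with
  | zero => exact mem_Icc_junctionState_iff.mpr hinit
  | succ n ih =>
    rw [show P (n + 1) = schemeStep _ G (P n) from funext (hscheme n)]
    exact hmaps ih

/-- Stability of the monotone junction scheme: the numerical solution stays in the
invariant box `[a_L,c_L] × [a_R,c_R]`. Here `P n j` stands for `p^n_{j+1/2}`. -/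
theorem scheme_stability
    (Δt Δx L aL cL aR cR : ℝ)
    (hΔt : 0 < Δt) (hΔx : 0 < Δx) (hL : 0 ≤ L)
    (hCFL : 2 * L ≤ Δx / Δt)
    (haLcL : aL ≤ cL) (haRcR : aR ≤ cR)
    (HL HR : ℝ → ℝ) (gL gR F0 : ℝ → ℝ → ℝ)
    (hgLcons : ∀ p, gL p p = HL p) (hgRcons : ∀ p, gR p p = HR p)
    (hgL1 : ∀ b, Monotone fun a => gL a b) (hgL2 : ∀ a, Antitone fun b => gL a b)
    (hgR1 : ∀ b, Monotone fun a => gR a b) (hgR2 : ∀ a, Antitone fun b => gR a b)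
    (hF01 : ∀ b, Monotone fun a => F0 a b) (hF02 : ∀ a, Antitone fun b => F0 a b)
    (hgLLip1 : ∀ a a' b, |gL a b - gL a' b| ≤ L * |a - a'|)
    (hgLLip2 : ∀ a b b', |gL a b - gL a b'| ≤ L * |b - b'|)
    (hgRLip1 : ∀ a a' b, |gR a b - gR a' b| ≤ L * |a - a'|)
    (hgRLip2 : ∀ a b b', |gR a b - gR a b'| ≤ L * |b - b'|)
    (hF0Lip1 : ∀ a a' b, |F0 a b - F0 a' b| ≤ L * |a - a'|)
    (hF0Lip2 : ∀ a b b', |F0 a b - F0 a b'| ≤ L * |b - b'|)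
    (hHL0 : HL aL = 0) (hHL0' : HL cL = 0) (hHR0 : HR aR = 0) (hHR0' : HR cR = 0)
    (hF00 : F0 aL aR = 0) (hF00' : F0 cL cR = 0)
    (G : ℤ → ℝ → ℝ → ℝ)
    (hG : ∀ j : ℤ, G j = if j ≤ -1 then gL else if 1 ≤ j then gR else F0)
    (P : ℕ → ℤ → ℝ)
    (hscheme : ∀ (n : ℕ) (j : ℤ), P (n + 1) j =
        P n j - (Δt / Δx) * (G (j + 1) (P n j) (P n (j + 1)) - G j (P n (j - 1)) (P n j)))
    (hinit : ∀ j : ℤ, (j ≤ -1 → P 0 j ∈ Icc aL cL) ∧ (0 ≤ j → P 0 j ∈ Icc aR cR)) :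
    ∀ (n : ℕ) (j : ℤ), (j ≤ -1 → P n j ∈ Icc aL cL) ∧ (0 ≤ j → P n j ∈ Icc aR cR) :=
  scheme_stability_general Δt Δx L aL cL aR cR hΔt hΔx hCFL HL HR gL gR F0 hgLcons hgRcons hgL1 hgL2
    hgR1 hgR2 hF01 hF02 hgLLip1 hgLLip2 hgRLip1 hgRLip2 hF0Lip1 hF0Lip2 hHL0 hHL0' hHR0 hHR0' hF00
    hF00' G hG P hscheme hinit
end

section
/- Let F : ℝ³ → ℝ be nondecreasing in each variable, let Φ(a,b) be a numerical entropy flux satisfying Φ(a,b) = G(a∨k, b∨k) − G(a∧k, b∧k) for a fixed k with F(v₋,v,v₊) = v − (Δt/Δx)(G(v,v₊) − G(v₋,v)) and F(k,k,k)=k. Then for all v₋, v, v₊: |F(v₋,v,v₊) − k| ≤ |v − k| − (Δt/Δx)(Φ(v,v₊) − Φ(v₋,v)). (Discrete Kruzhkov entropy inequality for monotone three-point schemes.) -/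
/-!
Since `F` is monotone and fixes the constant state `k`, comparing the data with `k` coordinatewise
gives `|F(v₋,v,v₊) − k| = F ⊔ k − F ⊓ k ≤ F(v₋∨k, v∨k, v₊∨k) − F(v₋∧k, v∧k, v₊∧k)`.
As `F` is in conservation form, the right-hand side is exactly `|v − k|` minus `Δt/Δx` times
the difference of the entropy fluxes `Φ`.
-/

theorem monotone_uncurry₃ {α β γ δ : Type*} [Preorder α] [Preorder β] [Preorder γ] [Preorder δ]
    {F : α → β → γ → δ} (h₁ : ∀ b c, Monotone fun a => F a b c)
    (h₂ : ∀ a c, Monotone fun b => F a b c) (h₃ : ∀ a b, Monotone fun c => F a b c) :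
    Monotone fun p : α × β × γ => F p.1 p.2.1 p.2.2 :=
  fun _ _ h => (h₁ _ _ h.1).trans ((h₂ _ _ h.2.1).trans (h₃ _ _ h.2.2))

theorem Monotone.abs_sub_le_map_sup_sub_map_inf {α β : Type*} [Lattice α]
    [AddCommGroup β] [LinearOrder β] [IsOrderedAddMonoid β] {f : α → β} (hf : Monotone f)
    (x y : α) : |f x - f y| ≤ f (x ⊔ y) - f (x ⊓ y) := by
  rw [← max_sub_min_eq_abs']
  exact sub_le_sub (hf.le_map_sup x y) (hf.map_inf_le x y)

theorem discrete_entropy_inequality_general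
    (Δt Δx k : ℝ)
    (G : ℝ → ℝ → ℝ)
    (F : ℝ → ℝ → ℝ → ℝ)
    (hF : ∀ u v w, F u v w = v - (Δt / Δx) * (G v w - G u v))
    (hFmono1 : ∀ v w, Monotone fun u => F u v w)
    (hFmono2 : ∀ u w, Monotone fun v => F u v w)
    (hFmono3 : ∀ u v, Monotone fun w => F u v w)
    (hFk : F k k k = k)
    (Phi : ℝ → ℝ → ℝ)
    (hPhi : ∀ a b, Phi a b = G (max a k) (max b k) - G (min a k) (min b k)) :
    ∀ vm v vp : ℝ, |F vm v vp - k| ≤ |v - k| - (Δt / Δx) * (Phi v vp - Phi vm v) := by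
  intro vm v vp
  have hbound := (monotone_uncurry₃ hFmono1 hFmono2 hFmono3).abs_sub_le_map_sup_sub_map_inf
    (vm, v, vp) (k, k, k)
  simp only [Prod.mk_sup_mk, Prod.mk_inf_mk, hFk] at hbound
  calc |F vm v vp - k|
      ≤ F (max vm k) (max v k) (max vp k) - F (min vm k) (min v k) (min vp k) := hbound
    _ = |v - k| - (Δt / Δx) * (Phi v vp - Phi vm v) := by
      rw [hF, hF, hPhi, hPhi, ← max_sub_min_eq_abs']
      ring

/-- Discrete Kruzhkov entropy inequality for monotone three-point schemes. -/
theorem discrete_entropy_inequality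
    (Δt Δx k : ℝ) (hΔt : 0 < Δt) (hΔx : 0 < Δx)
    (G : ℝ → ℝ → ℝ)
    (hG1 : ∀ b, Monotone fun a => G a b) (hG2 : ∀ a, Antitone fun b => G a b)
    (F : ℝ → ℝ → ℝ → ℝ)
    (hF : ∀ u v w, F u v w = v - (Δt / Δx) * (G v w - G u v))
    (hFmono1 : ∀ v w, Monotone fun u => F u v w)
    (hFmono2 : ∀ u w, Monotone fun v => F u v w)
    (hFmono3 : ∀ u v, Monotone fun w => F u v w)
    (hFk : F k k k = k)
    (Phi : ℝ → ℝ → ℝ)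
    (hPhi : ∀ a b, Phi a b = G (max a k) (max b k) - G (min a k) (min b k)) :
    ∀ vm v vp : ℝ, |F vm v vp - k| ≤ |v - k| - (Δt / Δx) * (Phi v vp - Phi vm v) :=
  discrete_entropy_inequality_general Δt Δx k G F hF hFmono1 hFmono2 hFmono3 hFk Phi hPhi
end

section
/- For the monotone junction scheme cell j=0 (update p^{n+1}_{1/2} = F₀-coupled Godunov step), for any (k_L,k_R), the following discrete entropy inequality with remainder holds: |p^{n+1}_{1/2} − k_R| ≤ |p^n_{1/2} − k_R| + (Δt/Δx)(Φ_0^n − Φ_1^n + R_R), where Φ_0^n = F₀(p^n_{−1/2}∨k_L, p^n_{1/2}∨k_R) − F₀(p^n_{−1/2}∧k_L, p^n_{1/2}∧k_R), Φ_1^n = g^{H_R}(p^n_{1/2}∨k_R, p^n_{3/2}∨k_R) − g^{H_R}(p^n_{1/2}∧k_R, p^n_{3/2}∧k_R), and R_R = |H_R(k_R) − F₀(k_L,k_R)|. -/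
/-!
The update `S` is monotone in `(p^n_{-1/2}, p^n_{1/2}, p^n_{3/2})`, so comparing the data with the
constant state `(k_L, k_R, k_R)` gives the Crandall–Majda bound
`|S(x) - S(k)| ≤ S(x ∨ k) - S(x ∧ k)`, whose right-hand side expands to `|p - k_R|` plus the flux
differences. The constant state is not a steady state of the junction cell: `S(k)` differs from `k_R`
by `(Δt/Δx)(H_R(k_R) - F₀(k_L, k_R))`, which is the remainder `R_R`.
-/

lemma Monotone.abs_sub_le_sup_sub_inf {α β : Type*} [Lattice α] [AddCommGroup β] [LinearOrder β]
    [IsOrderedAddMonoid β] {f : α → β} (hf : Monotone f) (x k : α) :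
    |f x - f k| ≤ f (x ⊔ k) - f (x ⊓ k) :=
  abs_sub_le_iff.2 ⟨sub_le_sub (hf le_sup_left) (hf inf_le_right),
    sub_le_sub (hf le_sup_right) (hf inf_le_left)⟩

lemma monotone_uncurry₃_s11 {α β γ δ : Type*} [Preorder α] [Preorder β] [Preorder γ] [Preorder δ]
    {S : α → β → γ → δ} (h₁ : ∀ v w, Monotone fun u => S u v w)
    (h₂ : ∀ u w, Monotone fun v => S u v w) (h₃ : ∀ u v, Monotone fun w => S u v w) :
    Monotone fun x : α × β × γ => S x.1 x.2.1 x.2.2 :=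
  fun _ _ h => (h₁ _ _ h.1).trans ((h₂ _ _ h.2.1).trans (h₃ _ _ h.2.2))

section JunctionScheme

variable {r : ℝ} {HR : ℝ → ℝ} {gR F0 : ℝ → ℝ → ℝ} {S : ℝ → ℝ → ℝ → ℝ}

lemma junction_update_sup_sub_inf
    (hS : ∀ u v w, S u v w = v - r * (gR v w - F0 u v)) (pm p q kL kR : ℝ) :
    S (max pm kL) (max p kR) (max q kR) - S (min pm kL) (min p kR) (min q kR) =
      |p - kR| + r *
        ((F0 (max pm kL) (max p kR) - F0 (min pm kL) (min p kR))
          - (gR (max p kR) (max q kR) - gR (min p kR) (min q kR))) := by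
  rw [hS, hS, ← max_sub_min_eq_abs, max_comm kR p, min_comm kR p]
  ring

lemma abs_junction_update_const_sub (hr : 0 ≤ r)
    (hS : ∀ u v w, S u v w = v - r * (gR v w - F0 u v)) (hgRcons : ∀ p, gR p p = HR p)
    (kL kR : ℝ) :
    |S kL kR kR - kR| = r * |HR kR - F0 kL kR| := by
  rw [hS, hgRcons, sub_sub_cancel_left, abs_neg, abs_mul, abs_of_nonneg hr]

end JunctionScheme

/-- `pm`, `p`, `q` stand for `p^n_{-1/2}`, `p^n_{1/2}`, `p^n_{3/2}`. -/
theorem junction_cell_entropy_inequality_general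
    (Δt Δx kL kR : ℝ) (hΔt : 0 < Δt) (hΔx : 0 < Δx)
    (HR : ℝ → ℝ) (gR F0 : ℝ → ℝ → ℝ)
    (hgRcons : ∀ p, gR p p = HR p)
    (S : ℝ → ℝ → ℝ → ℝ)
    (hS : ∀ u v w, S u v w = v - (Δt / Δx) * (gR v w - F0 u v))
    (hSmono1 : ∀ v w, Monotone fun u => S u v w)
    (hSmono2 : ∀ u w, Monotone fun v => S u v w)
    (hSmono3 : ∀ u v, Monotone fun w => S u v w)
    (pm p q : ℝ) :
    |S pm p q - kR| ≤ |p - kR| + (Δt / Δx) *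
      ((F0 (max pm kL) (max p kR) - F0 (min pm kL) (min p kR))
        - (gR (max p kR) (max q kR) - gR (min p kR) (min q kR))
        + |HR kR - F0 kL kR|) := by
  have hcompare := (monotone_uncurry₃_s11 hSmono1 hSmono2 hSmono3).abs_sub_le_sup_sub_inf
    (pm, p, q) (kL, kR, kR)
  simp only [Prod.mk_sup_mk, Prod.mk_inf_mk] at hcompare
  rw [junction_update_sup_sub_inf hS] at hcompare
  have hremainder := abs_junction_update_const_sub (div_pos hΔt hΔx).le hS hgRcons kL kR
  calc |S pm p q - kR| ≤ |S pm p q - S kL kR kR| + |S kL kR kR - kR| := abs_sub_le _ _ _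
    _ ≤ _ := by rw [hremainder]; linarith

/-- Discrete entropy inequality with remainder for the junction cell `j = 0`.
Here `pm`, `p`, `q` stand for `p^n_{-1/2}`, `p^n_{1/2}`, `p^n_{3/2}`. -/
theorem junction_cell_entropy_inequality
    (Δt Δx L kL kR : ℝ) (hΔt : 0 < Δt) (hΔx : 0 < Δx) (hL : 0 ≤ L)
    (hCFL : 2 * L ≤ Δx / Δt)
    (HR : ℝ → ℝ) (gR F0 : ℝ → ℝ → ℝ)
    (hgRcons : ∀ p, gR p p = HR p)
    (hgR1 : ∀ b, Monotone fun a => gR a b) (hgR2 : ∀ a, Antitone fun b => gR a b)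
    (hF01 : ∀ b, Monotone fun a => F0 a b) (hF02 : ∀ a, Antitone fun b => F0 a b)
    (hgRLip1 : ∀ a a' b, |gR a b - gR a' b| ≤ L * |a - a'|)
    (hgRLip2 : ∀ a b b', |gR a b - gR a b'| ≤ L * |b - b'|)
    (hF0Lip1 : ∀ a a' b, |F0 a b - F0 a' b| ≤ L * |a - a'|)
    (hF0Lip2 : ∀ a b b', |F0 a b - F0 a b'| ≤ L * |b - b'|)
    (S : ℝ → ℝ → ℝ → ℝ)
    (hS : ∀ u v w, S u v w = v - (Δt / Δx) * (gR v w - F0 u v))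
    (hSmono1 : ∀ v w, Monotone fun u => S u v w)
    (hSmono2 : ∀ u w, Monotone fun v => S u v w)
    (hSmono3 : ∀ u v, Monotone fun w => S u v w)
    (pm p q : ℝ) :
    |S pm p q - kR| ≤ |p - kR| + (Δt / Δx) *
      ((F0 (max pm kL) (max p kR) - F0 (min pm kL) (min p kR))
        - (gR (max p kR) (max q kR) - gR (min p kR) (min q kR))
        + |HR kR - F0 kL kR|) :=
  junction_cell_entropy_inequality_general Δt Δx kL kR hΔt hΔx HR gR F0 hgRcons S hS hSmono1 hSmono2
    hSmono3 pm p q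
end

section
/- Discrete Oleinik comparison: let w^n_j satisfy max(0, w^{n+1}_j) ≤ ŵ^n_j − Δt(δ/8)(ŵ^n_j)² for j ∈ [J₁+1, J₂−1], where ŵ^n_j = max(0, w^n_{j−1}, w^n_j, w^n_{j+1}), and suppose 0 ≤ ŵ^n_j ≤ (Δt δ/4)^{−1} for all relevant j, n, and sup_{J₁ ≤ j ≤ J₂} w^0_j ≤ (Δt δ/4)^{−1}. Then for all n with 0 ≤ n ≤ (J₂−J₁)/2: (δ/8)·sup_{J₁+n ≤ j ≤ J₂−n} w^n_j ≤ 1/((n+1)Δt). -/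
/-! With `a = Δt δ / 8` and `u = a ŵ`, one step of the scheme gives
`1 - (c + 1) a w^{n+1}_j ≥ 1 - (c + 1)(u - u²) = (1 - c u)(1 - u) + u² ≥ 0` whenever `c u ≤ 1`
and `c ≥ 1`. So the bound `(n + 1) a w^n_j ≤ 1`, which holds at `n = 0` by the initial bound,
propagates by induction, losing one cell at each end of the index interval per time step. -/

def localMax (v : ℤ → ℝ) (j : ℤ) : ℝ := max 0 (max (v (j - 1)) (max (v j) (v (j + 1))))

lemma localMax_nonneg (v : ℤ → ℝ) (j : ℤ) : 0 ≤ localMax v j := le_max_left _ _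

lemma localMax_le {v : ℤ → ℝ} {j : ℤ} {B : ℝ} (hB : 0 ≤ B)
    (hv : ∀ k, j - 1 ≤ k → k ≤ j + 1 → v k ≤ B) : localMax v j ≤ B :=
  max_le hB <| max_le (hv _ le_rfl (by omega)) <|
    max_le (hv _ (by omega) (by omega)) (hv _ (by omega) le_rfl)

lemma sub_mul_sq_le_inv_add_one {a c x : ℝ} (ha : 0 < a) (hc : 1 ≤ c) (hx₀ : 0 ≤ x)
    (hx : x ≤ (c * a)⁻¹) : x - a * x ^ 2 ≤ ((c + 1) * a)⁻¹ := by
  have hcu : c * (a * x) ≤ 1 := by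
    rw [← mul_assoc, ← le_inv_mul_iff₀ (by positivity), mul_one]; exact hx
  have hu : a * x ≤ 1 := le_trans (le_mul_of_one_le_left (by positivity) hc) hcu
  rw [← one_div, le_div_iff₀ (by positivity)]
  nlinarith [mul_nonneg (sub_nonneg.2 hcu) (sub_nonneg.2 hu)]

theorem le_inv_of_step_le_localMax {a : ℝ} (ha : 0 < a) {J₁ J₂ : ℤ} {w : ℕ → ℤ → ℝ}
    (hstep : ∀ n j, J₁ + 1 ≤ j → j ≤ J₂ - 1 →
      w (n + 1) j ≤ localMax (w n) j - a * localMax (w n) j ^ 2)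
    (hinit : ∀ j, J₁ ≤ j → j ≤ J₂ → w 0 j ≤ a⁻¹) (n : ℕ) :
    ∀ j, J₁ + n ≤ j → j ≤ J₂ - n → w n j ≤ ((n + 1) * a)⁻¹ := by
  induction n with
  | zero => simpa using hinit
  | succ n ih =>
    intro j hj₁ hj₂
    push_cast at hj₁ hj₂ ⊢
    have hmax : localMax (w n) j ≤ ((n + 1) * a)⁻¹ :=
      localMax_le (by positivity) fun k hk₁ hk₂ => ih k (by omega) (by omega)
    calc w (n + 1) j ≤ localMax (w n) j - a * localMax (w n) j ^ 2 :=
          hstep n j (by omega) (by omega)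
      _ ≤ ((n + 1 + 1) * a)⁻¹ :=
          sub_mul_sq_le_inv_add_one ha (by simp) (localMax_nonneg _ _) hmax

theorem discrete_oleinik_comparison_general
    (Δt δ : ℝ) (hΔt : 0 < Δt) (hδ : 0 < δ)
    (J₁ J₂ : ℤ)
    (w : ℕ → ℤ → ℝ) (hatw : ℕ → ℤ → ℝ)
    (hhatw : ∀ (n : ℕ) (j : ℤ),
      hatw n j = max 0 (max (w n (j - 1)) (max (w n j) (w n (j + 1)))))
    (hstep : ∀ (n : ℕ) (j : ℤ), J₁ + 1 ≤ j → j ≤ J₂ - 1 →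
      max 0 (w (n + 1) j) ≤ hatw n j - Δt * (δ / 8) * (hatw n j) ^ 2)
    (hinit : ∀ j : ℤ, J₁ ≤ j → j ≤ J₂ → w 0 j ≤ (Δt * δ / 4)⁻¹) :
    ∀ n : ℕ, 2 * (n : ℤ) ≤ J₂ - J₁ →
      ∀ j : ℤ, J₁ + n ≤ j → j ≤ J₂ - n →
        (δ / 8) * w n j ≤ 1 / ((n + 1) * Δt) := by
  have ha : 0 < Δt * (δ / 8) := by positivity
  obtain rfl : hatw = fun n => localMax (w n) := funext₂ hhatw
  have hdecay := le_inv_of_step_le_localMax ha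
    (fun n j hj₁ hj₂ => (le_max_right _ _).trans (hstep n j hj₁ hj₂))
    (fun j hj₁ hj₂ => (hinit j hj₁ hj₂).trans <| inv_anti₀ ha (by linarith))
  intro n _ j hj₁ hj₂
  calc δ / 8 * w n j ≤ δ / 8 * ((n + 1) * (Δt * (δ / 8)))⁻¹ := by
        gcongr; exact hdecay n j hj₁ hj₂
    _ = 1 / ((n + 1) * Δt) := by field_simp

/-- Discrete Oleinik comparison estimate for the localized discrete gradient. -/
theorem discrete_oleinik_comparison
    (Δt δ : ℝ) (hΔt : 0 < Δt) (hδ : 0 < δ)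
    (J₁ J₂ : ℤ) (hJ : J₁ < J₂)
    (w : ℕ → ℤ → ℝ) (hatw : ℕ → ℤ → ℝ)
    (hhatw : ∀ (n : ℕ) (j : ℤ),
      hatw n j = max 0 (max (w n (j - 1)) (max (w n j) (w n (j + 1)))))
    (hstep : ∀ (n : ℕ) (j : ℤ), J₁ + 1 ≤ j → j ≤ J₂ - 1 →
      max 0 (w (n + 1) j) ≤ hatw n j - Δt * (δ / 8) * (hatw n j) ^ 2)
    (hbound : ∀ (n : ℕ) (j : ℤ), hatw n j ≤ (Δt * δ / 4)⁻¹)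
    (hinit : ∀ j : ℤ, J₁ ≤ j → j ≤ J₂ → w 0 j ≤ (Δt * δ / 4)⁻¹) :
    ∀ n : ℕ, 2 * (n : ℤ) ≤ J₂ - J₁ →
      ∀ j : ℤ, J₁ + n ≤ j → j ≤ J₂ - n →
        (δ / 8) * w n j ≤ 1 / ((n + 1) * Δt) :=
  discrete_oleinik_comparison_general Δt δ hΔt hδ J₁ J₂ w hatw hhatw hstep hinit
end

section
/- Total variation bound: suppose q_{j+1/2} ∈ ℝ for j ∈ [J₁, J₂] satisfy (q_{j+1/2} − q_{j−1/2})/Δx ≤ B for all j ∈ [J₁, J₂−1] (one-sided gradient bound) and |q_{j−1/2}| ≤ M for all j ∈ [J₁, J₂], with B ≥ 0, M > 0. Then the total variation satisfies Σ_{j∈[J₁,J₂−1]} |q_{j+1/2} − q_{j−1/2}| ≤ 2M + 2B(J₂−J₁)Δx. -/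
lemma telescope_Icc (Q : ℤ → ℝ) (a : ℤ) :
    ∀ b : ℤ, a ≤ b → ∑ j ∈ Finset.Icc a (b - 1), (Q (j + 1) - Q j) = Q b - Q a := by
  refine Int.le_induction ?_ ?_
  · simp
  · intro n hn ih
    have hins : Finset.Icc a (n + 1 - 1) = insert n (Finset.Icc a (n - 1)) := by
      ext x; simp [Finset.mem_Icc]; omega
    rw [hins, Finset.sum_insert (by simp [Finset.mem_Icc]), ih]
    ring

/-- Total variation bound: a one-sided gradient bound together with an `L^∞` bound
controls the total variation. Here `Q j` stands for `q_{j-1/2}`. -/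
theorem total_variation_bound
    (J₁ J₂ : ℤ) (hJ : J₁ ≤ J₂) (Δx B M : ℝ)
    (hΔx : 0 < Δx) (hB : 0 ≤ B) (hM : 0 < M)
    (Q : ℤ → ℝ)
    (hgrad : ∀ j : ℤ, J₁ ≤ j → j ≤ J₂ - 1 → Q (j + 1) - Q j ≤ B * Δx)
    (hbound : ∀ j : ℤ, J₁ ≤ j → j ≤ J₂ → |Q j| ≤ M) :
    ∑ j ∈ Finset.Icc J₁ (J₂ - 1), |Q (j + 1) - Q j| ≤
      2 * M + 2 * B * ((J₂ - J₁ : ℤ) : ℝ) * Δx := by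
  have key : ∀ j ∈ Finset.Icc J₁ (J₂ - 1),
      |Q (j + 1) - Q j| ≤ 2 * (B * Δx) - (Q (j + 1) - Q j) := by
    intro j hj
    rw [Finset.mem_Icc] at hj
    have h := hgrad j hj.1 hj.2
    rw [abs_sub_le_iff]
    constructor
    · linarith
    · have : 0 ≤ B * Δx := mul_nonneg hB hΔx.le
      linarith
  calc ∑ j ∈ Finset.Icc J₁ (J₂ - 1), |Q (j + 1) - Q j|
      ≤ ∑ j ∈ Finset.Icc J₁ (J₂ - 1), (2 * (B * Δx) - (Q (j + 1) - Q j)) :=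
        Finset.sum_le_sum key
    _ = (Finset.Icc J₁ (J₂ - 1)).card * (2 * (B * Δx)) - (Q J₂ - Q J₁) := by
        rw [Finset.sum_sub_distrib, telescope_Icc Q J₁ J₂ hJ, Finset.sum_const,
          nsmul_eq_mul]
    _ ≤ 2 * M + 2 * B * ((J₂ - J₁ : ℤ) : ℝ) * Δx := by
        have hcard : ((Finset.Icc J₁ (J₂ - 1)).card : ℝ) = ((J₂ - J₁ : ℤ) : ℝ) := by
          rw [Int.card_Icc]
          have h : (J₂ - 1 + 1 - J₁) = J₂ - J₁ := by ring
          rw [h]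
          exact_mod_cast congrArg (Int.cast : ℤ → ℝ) (Int.toNat_of_nonneg (by omega : (0:ℤ) ≤ J₂ - J₁))
        rw [hcard]
        have h1 := hbound J₁ le_rfl hJ
        have h2 := hbound J₂ hJ le_rfl
        have h1' := abs_le.mp h1
        have h2' := abs_le.mp h2
        nlinarith
end

section
/- Lack of L¹-dissipativity for junctions with at least 3 branches: let I, J be disjoint finite index sets with n = |I| ≥ 1, m = |J| ≥ 1 and n+m ≥ 3, with concave fluxes f^α on [a_α,c_α] vanishing at the endpoints, weights θ_α ∈ (0,1] with Σ_{i∈I} θ_i = 1 = Σ_{j∈J} θ_j, and a flux limiter A ∈ (0, A₀] where A₀ = min_α max f^α. Then the Hamilton-Jacobi germ G_A^{HJ} = {p : ∃λ, θ_α^{−1} f^α(p_α) = λ = min(A, min_{i∈I} θ_i^{−1} f^{i,+}(p_i), min_{j∈J} θ_j^{−1} f^{j,−}(p_j)) for all α} is NOT L¹-dissipative: there exist p, p' ∈ G_A^{HJ} with Σ_{i∈I} sgn(p_i'−p_i)(f^i(p_i')−f^i(p_i)) < Σ_{j∈J} sgn(p_j'−p_j)(f^j(p_j')−f^j(p_j)).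 -/
private lemma branch_pts {a c : ℝ} {f : ℝ → ℝ} (hac : a ≤ c)
    (hcont : ContinuousOn f (Set.Icc a c)) (ha0 : f a = 0) (hc0 : f c = 0)
    {lam : ℝ} (hlam : 0 < lam) (hex : ∃ x ∈ Set.Icc a c, lam ≤ f x) :
    ∃ qp qm : ℝ, qp ∈ Set.Icc a c ∧ qm ∈ Set.Icc a c ∧
      f qp = lam ∧ f qm = lam ∧
      ∀ x ∈ Set.Icc a c, lam ≤ f x → qp ≤ x ∧ x ≤ qm := by
  obtain ⟨x0, hx0, hx0f⟩ := hex
  set S : Set ℝ := Set.Icc a c ∩ f ⁻¹' Set.Ici lam with hSdef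
  have hSne : S.Nonempty := ⟨x0, hx0, hx0f⟩
  have hSsub : S ⊆ Set.Icc a c := Set.inter_subset_left
  have hScl : IsClosed S := hcont.preimage_isClosed_of_isClosed isClosed_Icc isClosed_Ici
  have hbb : BddBelow S := bddBelow_Icc.mono hSsub
  have hba : BddAbove S := bddAbove_Icc.mono hSsub
  have hqpS : sInf S ∈ S := hScl.csInf_mem hSne hbb
  have hqmS : sSup S ∈ S := hScl.csSup_mem hSne hba
  refine ⟨sInf S, sSup S, hSsub hqpS, hSsub hqmS, ?_, ?_, ?_⟩
  · have hq2 : lam ≤ f (sInf S) := hqpS.2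
    rcases eq_or_lt_of_le hq2 with h | h
    · exact h.symm
    · exfalso
      have haq : a < sInf S := by
        rcases eq_or_lt_of_le ((hSsub hqpS).1 : a ≤ sInf S) with h' | h'
        · exfalso; rw [← h', ha0] at hq2; linarith
        · exact h'
      have hmem : lam ∈ f '' Set.Icc a (sInf S) := by
        apply intermediate_value_Icc haq.le
          (hcont.mono (Set.Icc_subset_Icc_right (hSsub hqpS).2))
        rw [ha0]; exact ⟨hlam.le, h.le⟩
      obtain ⟨x, hx, hfx⟩ := hmem
      have hxS : x ∈ S := ⟨⟨hx.1, hx.2.trans (hSsub hqpS).2⟩, le_of_eq hfx.symm⟩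
      have hle : sInf S ≤ x := csInf_le hbb hxS
      have hxq : x = sInf S := le_antisymm hx.2 hle
      rw [hxq] at hfx
      exact absurd hfx (ne_of_gt h)
  · have hq2 : lam ≤ f (sSup S) := hqmS.2
    rcases eq_or_lt_of_le hq2 with h | h
    · exact h.symm
    · exfalso
      have hqc : sSup S < c := by
        rcases eq_or_lt_of_le ((hSsub hqmS).2 : sSup S ≤ c) with h' | h'
        · exfalso; rw [h', hc0] at hq2; linarith
        · exact h'
      have hmem : lam ∈ f '' Set.Icc (sSup S) c := by
        apply intermediate_value_Icc' hqc.le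
          (hcont.mono (Set.Icc_subset_Icc_left (hSsub hqmS).1))
        rw [hc0]; exact ⟨hlam.le, h.le⟩
      obtain ⟨x, hx, hfx⟩ := hmem
      have hxS : x ∈ S := ⟨⟨(hSsub hqmS).1.trans hx.1, hx.2⟩, le_of_eq hfx.symm⟩
      have hle : x ≤ sSup S := le_csSup hba hxS
      have hxq : x = sSup S := le_antisymm hle hx.1
      rw [hxq] at hfx
      exact absurd hfx (ne_of_gt h)
  · intro x hx hfx
    exact ⟨csInf_le hbb ⟨hx, hfx⟩, le_csSup hba ⟨hx, hfx⟩⟩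

private lemma csSup_image_eq {s : Set ℝ} {f : ℝ → ℝ} {q lam : ℝ}
    (hq : q ∈ s) (hfq : f q = lam) (hub : ∀ x ∈ s, f x ≤ lam) :
    sSup (f '' s) = lam := by
  have hba : BddAbove (f '' s) := ⟨lam, by rintro y ⟨x, hx, rfl⟩; exact hub x hx⟩
  apply le_antisymm
  · exact csSup_le ⟨lam, q, hq, hfq⟩ (by rintro y ⟨x, hx, rfl⟩; exact hub x hx)
  · rw [← hfq]; exact le_csSup hba ⟨q, hq, rfl⟩

private lemma le_csSup_image {s : Set ℝ} {f : ℝ → ℝ} {q lam : ℝ}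
    (hq : q ∈ s) (hfq : lam ≤ f q) (hba : BddAbove (f '' s)) :
    lam ≤ sSup (f '' s) :=
  hfq.trans (le_csSup hba ⟨q, hq, rfl⟩)

/-- For a junction with at least three branches and positive flux limiter, the
Hamilton-Jacobi germ is not $L^1$-dissipative. -/
theorem HJ_germ_not_dissipative
    {ιI ιJ : Type} [Fintype ιI] [Fintype ιJ] [Nonempty ιI] [Nonempty ιJ]
    (a c : ιI ⊕ ιJ → ℝ) (f : ιI ⊕ ιJ → ℝ → ℝ) (θ : ιI ⊕ ιJ → ℝ) (A : ℝ)
    (hac : ∀ β, a β < c β)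
    (hcont : ∀ β, ContinuousOn (f β) (Set.Icc (a β) (c β)))
    (hconc : ∀ β, ConcaveOn ℝ (Set.Icc (a β) (c β)) (f β))
    (hnonneg : ∀ β, ∀ x ∈ Set.Icc (a β) (c β), 0 ≤ f β x)
    (henda : ∀ β, f β (a β) = 0) (hendc : ∀ β, f β (c β) = 0)
    (hθpos : ∀ β, 0 < θ β) (hθle : ∀ β, θ β ≤ 1)
    (hθI : ∑ i : ιI, θ (Sum.inl i) = 1) (hθJ : ∑ j : ιJ, θ (Sum.inr j) = 1)
    (hAmax : ∀ β, ∃ x ∈ Set.Icc (a β) (c β), A ≤ f β x)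
    (G : Set ((ιI ⊕ ιJ) → ℝ))
    (hG : G = {p | (∀ β, p β ∈ Set.Icc (a β) (c β)) ∧ ∃ lam : ℝ,
        (∀ β, f β (p β) / θ β = lam) ∧
        lam = min A (min
          (Finset.univ.inf' Finset.univ_nonempty (fun i : ιI =>
            sSup (f (Sum.inl i) '' Set.Icc (a (Sum.inl i)) (p (Sum.inl i))) / θ (Sum.inl i)))
          (Finset.univ.inf' Finset.univ_nonempty (fun j : ιJ =>
            sSup (f (Sum.inr j) '' Set.Icc (p (Sum.inr j)) (c (Sum.inr j))) / θ (Sum.inr j))))})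
    (hcard : 3 ≤ Fintype.card ιI + Fintype.card ιJ)
    (hApos : 0 < A) :
    ∃ p ∈ G, ∃ p' ∈ G,
      ∑ i : ιI, Real.sign (p' (Sum.inl i) - p (Sum.inl i)) *
          (f (Sum.inl i) (p' (Sum.inl i)) - f (Sum.inl i) (p (Sum.inl i))) <
        ∑ j : ιJ, Real.sign (p' (Sum.inr j) - p (Sum.inr j)) *
          (f (Sum.inr j) (p' (Sum.inr j)) - f (Sum.inr j) (p (Sum.inr j))) := by
  classical
  have hθA : ∀ β, 0 < θ β * A := fun β => mul_pos (hθpos β) hApos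
  have hθA2 : ∀ β, 0 < θ β * (A / 2) := fun β => mul_pos (hθpos β) (half_pos hApos)
  have hkey : ∀ β, ∃ qpA qmA qph qmh : ℝ,
      ((qpA ∈ Set.Icc (a β) (c β) ∧ qmA ∈ Set.Icc (a β) (c β)) ∧
       (qph ∈ Set.Icc (a β) (c β) ∧ qmh ∈ Set.Icc (a β) (c β))) ∧
      ((f β qpA = θ β * A ∧ f β qmA = θ β * A) ∧
       (f β qph = θ β * (A / 2) ∧ f β qmh = θ β * (A / 2))) ∧
      (∀ x ∈ Set.Icc (a β) (c β), θ β * A ≤ f β x → qpA ≤ x ∧ x ≤ qmA) ∧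
      (∀ x ∈ Set.Icc (a β) (c β), θ β * (A / 2) ≤ f β x → qph ≤ x ∧ x ≤ qmh) := by
    intro β
    obtain ⟨x, hx, hxA⟩ := hAmax β
    have h1 : θ β * A ≤ A := by nlinarith [hθpos β, hθle β, hApos]
    have h2 : θ β * (A / 2) ≤ A := by nlinarith [hθpos β, hθle β, hApos]
    obtain ⟨u1, u2, m1, m2, v1, v2, b1⟩ :=
      branch_pts (hac β).le (hcont β) (henda β) (hendc β) (hθA β) ⟨x, hx, h1.trans hxA⟩
    obtain ⟨u3, u4, m3, m4, v3, v4, b2⟩ :=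
      branch_pts (hac β).le (hcont β) (henda β) (hendc β) (hθA2 β) ⟨x, hx, h2.trans hxA⟩
    exact ⟨u1, u2, u3, u4, ⟨⟨m1, m2⟩, m3, m4⟩, ⟨⟨v1, v2⟩, v3, v4⟩, b1, b2⟩
  choose qpA qmA qph qmh hmem hval hbtwA hbtwh using hkey
  have hne : ∀ β, θ β * (A / 2) ≠ θ β * A := fun β => by nlinarith [hθpos β, hApos]
  have hlt_pA : ∀ β, qph β < qpA β := by
    intro β
    have h := (hbtwh β (qpA β) (hmem β).1.1
      (by rw [(hval β).1.1]; nlinarith [hθpos β, hApos])).1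
    refine lt_of_le_of_ne h fun heq => hne β ?_
    rw [← (hval β).2.1, heq, (hval β).1.1]
  have hle_pm : ∀ β, qpA β ≤ qmA β := fun β =>
    (hbtwA β (qmA β) (hmem β).1.2 (le_of_eq (hval β).1.2.symm)).1
  have hlt_mh : ∀ β, qmA β < qmh β := by
    intro β
    have h := (hbtwh β (qmA β) (hmem β).1.2
      (by rw [(hval β).1.2]; nlinarith [hθpos β, hApos])).2
    refine lt_of_le_of_ne h fun heq => hne β ?_
    rw [← (hval β).2.2, ← heq, (hval β).1.2]
  have hchain : ∀ β, qph β ≤ qmh β := fun β =>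
    ((hlt_pA β).le.trans ((hle_pm β).trans (hlt_mh β).le))
  have hBdd : ∀ β (s : Set ℝ), s ⊆ Set.Icc (a β) (c β) → BddAbove (f β '' s) := by
    intro β s hs
    exact ((isCompact_Icc.image_of_continuousOn (hcont β)).bddAbove).mono
      (Set.image_mono hs)
  have hsupPA : ∀ β, sSup (f β '' Set.Icc (a β) (qpA β)) = θ β * A := by
    intro β
    refine csSup_image_eq ⟨(hmem β).1.1.1, le_refl _⟩ (hval β).1.1 ?_
    intro x hx
    by_contra hcon
    push_neg at hcon
    have hxI : x ∈ Set.Icc (a β) (c β) := ⟨hx.1, hx.2.trans (hmem β).1.1.2⟩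
    have h := (hbtwA β x hxI hcon.le).1
    have hx2 : x = qpA β := le_antisymm hx.2 h
    rw [hx2, (hval β).1.1] at hcon
    exact lt_irrefl _ hcon
  have hsupMA : ∀ β, sSup (f β '' Set.Icc (qmA β) (c β)) = θ β * A := by
    intro β
    refine csSup_image_eq ⟨le_refl _, (hmem β).1.2.2⟩ (hval β).1.2 ?_
    intro x hx
    by_contra hcon
    push_neg at hcon
    have hxI : x ∈ Set.Icc (a β) (c β) := ⟨(hmem β).1.2.1.trans hx.1, hx.2⟩
    have h := (hbtwA β x hxI hcon.le).2
    have hx2 : x = qmA β := le_antisymm h hx.1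
    rw [hx2, (hval β).1.2] at hcon
    exact lt_irrefl _ hcon
  have hsupPh : ∀ β, sSup (f β '' Set.Icc (a β) (qph β)) = θ β * (A / 2) := by
    intro β
    refine csSup_image_eq ⟨(hmem β).2.1.1, le_refl _⟩ (hval β).2.1 ?_
    intro x hx
    by_contra hcon
    push_neg at hcon
    have hxI : x ∈ Set.Icc (a β) (c β) := ⟨hx.1, hx.2.trans (hmem β).2.1.2⟩
    have h := (hbtwh β x hxI hcon.le).1
    have hx2 : x = qph β := le_antisymm hx.2 h
    rw [hx2, (hval β).2.1] at hcon
    exact lt_irrefl _ hcon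
  have hsupMh : ∀ β, sSup (f β '' Set.Icc (qmh β) (c β)) = θ β * (A / 2) := by
    intro β
    refine csSup_image_eq ⟨le_refl _, (hmem β).2.2.2⟩ (hval β).2.2 ?_
    intro x hx
    by_contra hcon
    push_neg at hcon
    have hxI : x ∈ Set.Icc (a β) (c β) := ⟨(hmem β).2.2.1.trans hx.1, hx.2⟩
    have h := (hbtwh β x hxI hcon.le).2
    have hx2 : x = qmh β := le_antisymm h hx.1
    rw [hx2, (hval β).2.2] at hcon
    exact lt_irrefl _ hcon
  have hgeMA : ∀ β, θ β * A ≤ sSup (f β '' Set.Icc (a β) (qmA β)) := fun β =>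
    le_csSup_image ⟨(hmem β).1.1.1, hle_pm β⟩ (le_of_eq (hval β).1.1.symm)
      (hBdd β _ (Set.Icc_subset_Icc_right (hmem β).1.2.2))
  have hgeMh : ∀ β, θ β * (A / 2) ≤ sSup (f β '' Set.Icc (a β) (qmh β)) := fun β =>
    le_csSup_image ⟨(hmem β).2.1.1, hchain β⟩ (le_of_eq (hval β).2.1.symm)
      (hBdd β _ (Set.Icc_subset_Icc_right (hmem β).2.2.2))
  have hgePh : ∀ β, θ β * (A / 2) ≤ sSup (f β '' Set.Icc (qph β) (c β)) := fun β =>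
    le_csSup_image ⟨hchain β, (hmem β).2.2.2⟩ (le_of_eq (hval β).2.2.symm)
      (hBdd β _ (Set.Icc_subset_Icc_left (hmem β).2.1.1))
  have hdivA : ∀ β, θ β * A / θ β = A := fun β => mul_div_cancel_left₀ A (hθpos β).ne'
  have hdivh : ∀ β, θ β * (A / 2) / θ β = A / 2 := fun β =>
    mul_div_cancel_left₀ _ (hθpos β).ne'
  have hdivle : ∀ β (s lam : ℝ), θ β * lam ≤ s → lam ≤ s / θ β := fun β s lam h =>
    (le_div_iff₀ (hθpos β)).2 (by rw [mul_comm]; exact h)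
  have hA2A : A / 2 ≤ A := by linarith
  rcases le_or_gt 2 (Fintype.card ιI) with h2I | h2I
  · -- at least two incoming roads
    obtain ⟨i1, i0, hi10⟩ := Fintype.exists_pair_of_one_lt_card (show 1 < Fintype.card ιI by omega)
    set P : ιI ⊕ ιJ → ℝ := Sum.elim
      (fun i => if i = i0 then qmA (Sum.inl i) else qpA (Sum.inl i))
      (fun j => qmA (Sum.inr j)) with hP
    set P' : ιI ⊕ ιJ → ℝ := Sum.elim
      (fun i => if i = i0 then qmh (Sum.inl i) else qph (Sum.inl i))
      (fun j => qph (Sum.inr j)) with hP'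
    refine ⟨P, ?_, P', ?_, ?_⟩
    · rw [hG]
      refine ⟨?_, A, ?_, ?_⟩
      · rintro (i | j)
        · simp only [hP, Sum.elim_inl]
          split_ifs
          · exact (hmem _).1.2
          · exact (hmem _).1.1
        · simp only [hP, Sum.elim_inr]
          exact (hmem _).1.2
      · rintro (i | j)
        · simp only [hP, Sum.elim_inl]
          split_ifs
          · rw [(hval _).1.2, hdivA]
          · rw [(hval _).1.1, hdivA]
        · simp only [hP, Sum.elim_inr]
          rw [(hval _).1.2, hdivA]
      · symm
        refine min_eq_left (le_min (Finset.le_inf' _ _ fun i _ => ?_)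
          (Finset.le_inf' _ _ fun j _ => ?_))
        · simp only [hP, Sum.elim_inl]
          split_ifs
          · exact hdivle _ _ _ (hgeMA _)
          · rw [hsupPA, hdivA]
        · simp only [hP, Sum.elim_inr]
          rw [hsupMA, hdivA]
    · rw [hG]
      refine ⟨?_, A / 2, ?_, ?_⟩
      · rintro (i | j)
        · simp only [hP', Sum.elim_inl]
          split_ifs
          · exact (hmem _).2.2
          · exact (hmem _).2.1
        · simp only [hP', Sum.elim_inr]
          exact (hmem _).2.1
      · rintro (i | j)
        · simp only [hP', Sum.elim_inl]
          split_ifs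
          · rw [(hval _).2.2, hdivh]
          · rw [(hval _).2.1, hdivh]
        · simp only [hP', Sum.elim_inr]
          rw [(hval _).2.1, hdivh]
      · refine (le_antisymm ?_ (le_min hA2A (le_min (Finset.le_inf' _ _ fun i _ => ?_)
          (Finset.le_inf' _ _ fun j _ => ?_)))).symm
        · refine le_trans (min_le_right _ _) (le_trans (min_le_left _ _)
            (le_trans (Finset.inf'_le _ (Finset.mem_univ i1)) ?_))
          simp only [hP', Sum.elim_inl, if_neg hi10]
          rw [hsupPh, hdivh]
        · simp only [hP', Sum.elim_inl]
          split_ifs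
          · exact hdivle _ _ _ (hgeMh _)
          · rw [hsupPh, hdivh]
        · simp only [hP', Sum.elim_inr]
          exact hdivle _ _ _ (hgePh _)
    · have hJeq : ∀ j : ιJ, Real.sign (P' (Sum.inr j) - P (Sum.inr j)) *
          (f (Sum.inr j) (P' (Sum.inr j)) - f (Sum.inr j) (P (Sum.inr j)))
          = θ (Sum.inr j) * (A / 2) := by
        intro j
        have hlt : P' (Sum.inr j) < P (Sum.inr j) := by
          simp only [hP, hP', Sum.elim_inr]
          exact lt_of_lt_of_le (hlt_pA _) (hle_pm _)
        rw [Real.sign_of_neg (sub_neg.2 hlt)]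
        simp only [hP, hP', Sum.elim_inr]
        rw [(hval _).2.1, (hval _).1.2]
        ring
      have hIle : ∀ i : ιI, Real.sign (P' (Sum.inl i) - P (Sum.inl i)) *
          (f (Sum.inl i) (P' (Sum.inl i)) - f (Sum.inl i) (P (Sum.inl i)))
          ≤ θ (Sum.inl i) * (A / 2) := by
        intro i
        by_cases h : i = i0
        · have hlt : P (Sum.inl i) < P' (Sum.inl i) := by
            simp only [hP, hP', Sum.elim_inl, if_pos h]
            exact hlt_mh _
          rw [Real.sign_of_pos (sub_pos.2 hlt)]
          simp only [hP, hP', Sum.elim_inl, if_pos h]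
          rw [(hval _).2.2, (hval _).1.2]
          nlinarith [hθA2 (Sum.inl i)]
        · have hlt : P' (Sum.inl i) < P (Sum.inl i) := by
            simp only [hP, hP', Sum.elim_inl, if_neg h]
            exact hlt_pA _
          rw [Real.sign_of_neg (sub_neg.2 hlt)]
          simp only [hP, hP', Sum.elim_inl, if_neg h]
          rw [(hval _).2.1, (hval _).1.1]
          nlinarith [hθA2 (Sum.inl i)]
      have hIlt : Real.sign (P' (Sum.inl i0) - P (Sum.inl i0)) *
          (f (Sum.inl i0) (P' (Sum.inl i0)) - f (Sum.inl i0) (P (Sum.inl i0)))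
          < θ (Sum.inl i0) * (A / 2) := by
        have hlt : P (Sum.inl i0) < P' (Sum.inl i0) := by
          simp only [hP, hP', Sum.elim_inl, if_pos rfl, if_true]
          exact hlt_mh _
        rw [Real.sign_of_pos (sub_pos.2 hlt)]
        simp only [hP, hP', Sum.elim_inl, if_pos rfl, if_true]
        rw [(hval _).2.2, (hval _).1.2]
        nlinarith [hθA2 (Sum.inl i0)]
      calc ∑ i : ιI, Real.sign (P' (Sum.inl i) - P (Sum.inl i)) *
            (f (Sum.inl i) (P' (Sum.inl i)) - f (Sum.inl i) (P (Sum.inl i)))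
          < ∑ i : ιI, θ (Sum.inl i) * (A / 2) :=
            Finset.sum_lt_sum (fun i _ => hIle i) ⟨i0, Finset.mem_univ _, hIlt⟩
        _ = A / 2 := by rw [← Finset.sum_mul, hθI, one_mul]
        _ = ∑ j : ιJ, θ (Sum.inr j) * (A / 2) := by rw [← Finset.sum_mul, hθJ, one_mul]
        _ = ∑ j : ιJ, Real.sign (P' (Sum.inr j) - P (Sum.inr j)) *
            (f (Sum.inr j) (P' (Sum.inr j)) - f (Sum.inr j) (P (Sum.inr j))) :=
            (Finset.sum_congr rfl fun j _ => hJeq j).symm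
  · -- at least two outgoing roads
    have h1I : 1 ≤ Fintype.card ιI := Fintype.card_pos
    obtain ⟨j2, j1, hj21⟩ := Fintype.exists_pair_of_one_lt_card
      (show 1 < Fintype.card ιJ by omega)
    set P : ιI ⊕ ιJ → ℝ := fun β => qmA β with hP
    set P' : ιI ⊕ ιJ → ℝ := Sum.elim
      (fun i => qmh (Sum.inl i))
      (fun j => if j = j1 then qmh (Sum.inr j) else qph (Sum.inr j)) with hP'
    refine ⟨P, ?_, P', ?_, ?_⟩
    · rw [hG]
      refine ⟨?_, A, ?_, ?_⟩
      · intro β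
        simp only [hP]
        exact (hmem _).1.2
      · intro β
        simp only [hP]
        rw [(hval _).1.2, hdivA]
      · symm
        refine min_eq_left (le_min (Finset.le_inf' _ _ fun i _ => ?_)
          (Finset.le_inf' _ _ fun j _ => ?_))
        · simp only [hP]
          exact hdivle _ _ _ (hgeMA _)
        · simp only [hP]
          rw [hsupMA, hdivA]
    · rw [hG]
      refine ⟨?_, A / 2, ?_, ?_⟩
      · rintro (i | j)
        · simp only [hP', Sum.elim_inl]
          exact (hmem _).2.2
        · simp only [hP', Sum.elim_inr]
          split_ifs
          · exact (hmem _).2.2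
          · exact (hmem _).2.1
      · rintro (i | j)
        · simp only [hP', Sum.elim_inl]
          rw [(hval _).2.2, hdivh]
        · simp only [hP', Sum.elim_inr]
          split_ifs
          · rw [(hval _).2.2, hdivh]
          · rw [(hval _).2.1, hdivh]
      · refine (le_antisymm ?_ (le_min hA2A (le_min (Finset.le_inf' _ _ fun i _ => ?_)
          (Finset.le_inf' _ _ fun j _ => ?_)))).symm
        · refine le_trans (min_le_right _ _) (le_trans (min_le_right _ _)
            (le_trans (Finset.inf'_le _ (Finset.mem_univ j1)) ?_))
          simp only [hP', Sum.elim_inr, if_pos rfl, if_true]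
          rw [hsupMh, hdivh]
        · simp only [hP', Sum.elim_inl]
          exact hdivle _ _ _ (hgeMh _)
        · simp only [hP', Sum.elim_inr]
          split_ifs
          · rw [hsupMh, hdivh]
          · exact hdivle _ _ _ (hgePh _)
    · have hIeq : ∀ i : ιI, Real.sign (P' (Sum.inl i) - P (Sum.inl i)) *
          (f (Sum.inl i) (P' (Sum.inl i)) - f (Sum.inl i) (P (Sum.inl i)))
          = θ (Sum.inl i) * (-(A / 2)) := by
        intro i
        have hlt : P (Sum.inl i) < P' (Sum.inl i) := by
          simp only [hP, hP', Sum.elim_inl]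
          exact hlt_mh _
        rw [Real.sign_of_pos (sub_pos.2 hlt)]
        simp only [hP, hP', Sum.elim_inl]
        rw [(hval _).2.2, (hval _).1.2]
        ring
      have hJge : ∀ j : ιJ, θ (Sum.inr j) * (-(A / 2)) ≤
          Real.sign (P' (Sum.inr j) - P (Sum.inr j)) *
          (f (Sum.inr j) (P' (Sum.inr j)) - f (Sum.inr j) (P (Sum.inr j))) := by
        intro j
        by_cases h : j = j1
        · have hlt : P (Sum.inr j) < P' (Sum.inr j) := by
            simp only [hP, hP', Sum.elim_inr, if_pos h]
            exact hlt_mh _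
          rw [Real.sign_of_pos (sub_pos.2 hlt)]
          simp only [hP, hP', Sum.elim_inr, if_pos h]
          rw [(hval _).2.2, (hval _).1.2]
          nlinarith [hθA2 (Sum.inr j)]
        · have hlt : P' (Sum.inr j) < P (Sum.inr j) := by
            simp only [hP, hP', Sum.elim_inr, if_neg h]
            exact lt_of_lt_of_le (hlt_pA _) (hle_pm _)
          rw [Real.sign_of_neg (sub_neg.2 hlt)]
          simp only [hP, hP', Sum.elim_inr, if_neg h]
          rw [(hval _).2.1, (hval _).1.2]
          nlinarith [hθA2 (Sum.inr j)]
      have hJlt : θ (Sum.inr j2) * (-(A / 2)) <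
          Real.sign (P' (Sum.inr j2) - P (Sum.inr j2)) *
          (f (Sum.inr j2) (P' (Sum.inr j2)) - f (Sum.inr j2) (P (Sum.inr j2))) := by
        have hlt : P' (Sum.inr j2) < P (Sum.inr j2) := by
          simp only [hP, hP', Sum.elim_inr, if_neg hj21]
          exact lt_of_lt_of_le (hlt_pA _) (hle_pm _)
        rw [Real.sign_of_neg (sub_neg.2 hlt)]
        simp only [hP, hP', Sum.elim_inr, if_neg hj21]
        rw [(hval _).2.1, (hval _).1.2]
        nlinarith [hθA2 (Sum.inr j2)]
      calc ∑ i : ιI, Real.sign (P' (Sum.inl i) - P (Sum.inl i)) *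
            (f (Sum.inl i) (P' (Sum.inl i)) - f (Sum.inl i) (P (Sum.inl i)))
          = ∑ i : ιI, θ (Sum.inl i) * (-(A / 2)) :=
            Finset.sum_congr rfl fun i _ => hIeq i
        _ = -(A / 2) := by rw [← Finset.sum_mul, hθI, one_mul]
        _ = ∑ j : ιJ, θ (Sum.inr j) * (-(A / 2)) := by rw [← Finset.sum_mul, hθJ, one_mul]
        _ < ∑ j : ιJ, Real.sign (P' (Sum.inr j) - P (Sum.inr j)) *
            (f (Sum.inr j) (P' (Sum.inr j)) - f (Sum.inr j) (P (Sum.inr j))) :=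
            Finset.sum_lt_sum (fun j _ => hJge j) ⟨j2, Finset.mem_univ _, hJlt⟩
end

section
/- Discrete gradient monotonicity: with w^n_j = (q^n_{j+1/2} − q^n_{j−1/2})/Δx for the Godunov scheme of a Lipschitz flux f (Lipschitz constant L_f), under the CFL condition Δx/Δt ≥ 2L_f, the map G(w₋, w, w₊, q₋, q₊) := w − (Δt/Δx²)[g^f(q₋ + wΔx, q₊ + w₊Δx) − 2g^f(q₋, q₊) + g^f(q₋ − w₋Δx, q₊ − wΔx)] is nondecreasing in each of the variables w₋, w, w₊, and G(0,0,0,q₋,q₊) = 0. -/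
/-- Monotonicity of the discrete-gradient evolution map for the Godunov scheme
under the CFL condition, and preservation of the zero gradient. -/
theorem discrete_gradient_map_monotone
    (Δt Δx Lf : ℝ) (hΔt : 0 < Δt) (hΔx : 0 < Δx) (hLf : 0 ≤ Lf)
    (hCFL : 2 * Lf ≤ Δx / Δt)
    (f : ℝ → ℝ) (g : ℝ → ℝ → ℝ)
    (hcons : ∀ p, g p p = f p)
    (hg1 : ∀ b, Monotone fun a => g a b) (hg2 : ∀ a, Antitone fun b => g a b)
    (hgLip1 : ∀ a a' b, |g a b - g a' b| ≤ Lf * |a - a'|)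
    (hgLip2 : ∀ a b b', |g a b - g a b'| ≤ Lf * |b - b'|)
    (G : ℝ → ℝ → ℝ → ℝ → ℝ → ℝ)
    (hGdef : ∀ wm w wp qm qp, G wm w wp qm qp = w - (Δt / Δx ^ 2) *
        (g (qm + w * Δx) (qp + wp * Δx) - 2 * g qm qp + g (qm - wm * Δx) (qp - w * Δx))) :
    (∀ w wp qm qp, Monotone fun wm => G wm w wp qm qp) ∧
    (∀ wm wp qm qp, Monotone fun w => G wm w wp qm qp) ∧
    (∀ wm w qm qp, Monotone fun wp => G wm w wp qm qp) ∧
    (∀ qm qp, G 0 0 0 qm qp = 0) := by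
  have hc : 0 ≤ Δt / Δx ^ 2 := by positivity
  have hkey : 2 * Lf * Δt ≤ Δx := by
    have := (div_le_div_iff₀ hΔt hΔt).mp (le_refl (Δx / Δt))
    calc 2 * Lf * Δt ≤ Δx / Δt * Δt := by
          exact mul_le_mul_of_nonneg_right hCFL hΔt.le
      _ = Δx := by field_simp
  refine ⟨?_, ?_, ?_, ?_⟩
  · intro w wp qm qp a b hab
    simp only [hGdef]
    have h := hg1 (qp - w * Δx) (show qm - b * Δx ≤ qm - a * Δx by nlinarith)
    simp only at h
    nlinarith [mul_le_mul_of_nonneg_left h hc]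
  · intro wm wp qm qp a b hab
    simp only [hGdef]
    have h1 := (abs_le.mp (hgLip1 (qm + b * Δx) (qm + a * Δx) (qp + wp * Δx))).2
    have h2 := (abs_le.mp (hgLip2 (qm - wm * Δx) (qp - b * Δx) (qp - a * Δx))).2
    have e1 : |qm + b * Δx - (qm + a * Δx)| = (b - a) * Δx := by
      rw [show qm + b * Δx - (qm + a * Δx) = (b - a) * Δx by ring]
      exact abs_of_nonneg (by nlinarith)
    have e2 : |qp - b * Δx - (qp - a * Δx)| = (b - a) * Δx := by
      rw [show qp - b * Δx - (qp - a * Δx) = -((b - a) * Δx) by ring, abs_neg]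
      exact abs_of_nonneg (by nlinarith)
    rw [e1] at h1
    rw [e2] at h2
    have hm1 := mul_le_mul_of_nonneg_left h1 hc
    have hm2 := mul_le_mul_of_nonneg_left h2 hc
    have hbound : Δt / Δx ^ 2 * (Lf * ((b - a) * Δx)) * 2 ≤ b - a := by
      have : Δt / Δx ^ 2 * (Lf * ((b - a) * Δx)) * 2 = (2 * Lf * Δt) * (b - a) / Δx := by
        field_simp
      rw [this, div_le_iff₀ hΔx]
      nlinarith
    nlinarith
  · intro wm w qm qp a b hab
    simp only [hGdef]
    have h := hg2 (qm + w * Δx) (show qp + a * Δx ≤ qp + b * Δx by nlinarith)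
    simp only at h
    nlinarith [mul_le_mul_of_nonneg_left h hc]
  · intro qm qp
    rw [hGdef]
    simp only [zero_mul, add_zero, sub_zero]
    ring
end

section
/- Strict positivity of the parabolic indicator for the strictly convex Godunov Hessian: let f be C² with f'' ≥ δ > 0, fix ŵ > 0 and points p < q defined by p(t) = p₀ + tΔx ŵ, q(t) = q₀ + tΔx ŵ, p'(t) = p₀ − tΔx ŵ, q'(t) = q₀ − tΔx ŵ with q₀ − p₀ = wΔx ≤ ŵΔx. Then for every t ∈ (1/2, 1]: 𝟙{f⁻(q(t)) < f(p(t)) and f'(p(t)) > 0} + 𝟙{f(q'(t)) > f⁺(p'(t)) and f'(q'(t)) < 0} ≥ 1. -/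
open Classical in
/-- For a strictly convex `C²` flux, at least one of the two "parabolic" indicator
conditions holds for every `t ∈ (1/2, 1]`. -/
theorem indicator_sum_ge_one
    (f : ℝ → ℝ) (δ p₀star Δx wmax p₀ q₀ : ℝ)
    (hδ : 0 < δ)
    (hf : ContDiff ℝ 2 f)
    (hconv : ∀ x, δ ≤ deriv (deriv f) x)
    (hmin : ∀ x, f p₀star ≤ f x)
    (hΔx : 0 < Δx) (hwmax : 0 < wmax)
    (hpq : q₀ - p₀ ≤ wmax * Δx)
    (t : ℝ) (ht : 1 / 2 < t) (ht1 : t ≤ 1) :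
    (1 : ℝ) ≤
      (if f (min (q₀ + t * Δx * wmax) p₀star) < f (p₀ + t * Δx * wmax) ∧
            0 < deriv f (p₀ + t * Δx * wmax) then 1 else 0) +
      (if f (max (p₀ - t * Δx * wmax) p₀star) < f (q₀ - t * Δx * wmax) ∧
            deriv f (q₀ - t * Δx * wmax) < 0 then 1 else 0) := by
  set c := t * Δx * wmax with hcdef
  have ht0 : (0:ℝ) < t := by linarith
  have hcpos : 0 < c := by positivity
  have h2c : wmax * Δx < 2 * c := by rw [hcdef]; nlinarith
  have hdf : Differentiable ℝ f := hf.differentiable two_ne_zero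
  have hdf2 : ContDiff ℝ 1 (deriv f) := by
    have h := (contDiff_succ_iff_deriv (n := 1)).mp (by exact_mod_cast hf)
    exact h.2.2
  have hmono : StrictMono (deriv f) :=
    strictMono_of_deriv_pos (fun x => lt_of_lt_of_le hδ (hconv x))
  have hm0 : deriv f p₀star = 0 := by
    have hloc : IsLocalMin f p₀star := Filter.Eventually.of_forall hmin
    exact hloc.deriv_eq_zero
  have hdpos : ∀ x, p₀star < x → 0 < deriv f x := fun x hx => hm0 ▸ hmono hx
  have hdneg : ∀ x, x < p₀star → deriv f x < 0 := fun x hx => hm0 ▸ hmono hx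
  have hincOn : StrictMonoOn f (Set.Ici p₀star) := by
    apply strictMonoOn_of_deriv_pos (convex_Ici p₀star) hdf.continuous.continuousOn
    intro x hx
    rw [interior_Ici] at hx
    exact hdpos x hx
  have hdecOn : StrictAntiOn f (Set.Iic p₀star) := by
    apply strictAntiOn_of_deriv_neg (convex_Iic p₀star) hdf.continuous.continuousOn
    intro x hx
    rw [interior_Iic] at hx
    exact hdneg x hx
  have hinc : ∀ x y, p₀star ≤ x → x < y → f x < f y := fun x y hx hxy =>
    hincOn hx (le_trans hx hxy.le) hxy
  have hdec : ∀ x y, x < y → y ≤ p₀star → f y < f x := fun x y hxy hy =>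
    hdecOn (le_trans hxy.le hy) hy hxy
  -- the key ordering : q₀ - c < p₀ + c
  have hQP : q₀ - c < p₀ + c := by linarith
  set A : Prop := f (min (q₀ + c) p₀star) < f (p₀ + c) ∧ 0 < deriv f (p₀ + c) with hA
  set B : Prop := f (max (p₀ - c) p₀star) < f (q₀ - c) ∧ deriv f (q₀ - c) < 0 with hB
  have key : A ∨ B := by
    by_cases hP : p₀star < p₀ + c
    · by_cases hQ : p₀star ≤ q₀ + c
      · left
        refine ⟨?_, hdpos _ hP⟩
        rw [min_eq_right hQ]
        exact hinc _ _ le_rfl hP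
      · push_neg at hQ
        have hQ' : q₀ - c < p₀star := by linarith
        by_cases hP' : p₀ - c ≤ p₀star
        · right
          refine ⟨?_, hdneg _ hQ'⟩
          rw [max_eq_right hP']
          exact hdec _ _ hQ' le_rfl
        · push_neg at hP'
          by_cases hfQ : f (q₀ + c) < f (p₀ + c)
          · left
            refine ⟨?_, hdpos _ hP⟩
            rw [min_eq_left hQ.le]
            exact hfQ
          · right
            push_neg at hfQ
            refine ⟨?_, hdneg _ hQ'⟩
            rw [max_eq_left hP'.le]
            have h1 : f (p₀ - c) < f (p₀ + c) := hinc _ _ hP'.le (by linarith)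
            have h2 : f (q₀ + c) < f (q₀ - c) := hdec _ _ (by linarith) hQ.le
            linarith
    · push_neg at hP
      right
      have hQ' : q₀ - c < p₀star := lt_of_lt_of_le hQP hP
      refine ⟨?_, hdneg _ hQ'⟩
      rw [max_eq_right (by linarith : p₀ - c ≤ p₀star)]
      exact hdec _ _ hQ' le_rfl
  rcases key with h | h
  · rw [if_pos h]
    have : (0:ℝ) ≤ if B then 1 else 0 := by split_ifs <;> norm_num
    linarith
  · rw [if_pos h]
    have : (0:ℝ) ≤ if A then 1 else 0 := by split_ifs <;> norm_num
    linarith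
end
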